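/- arXiv:1204.1861 — 6 statements merged into one kernel-verified Lean document; each statement's English description precedes it below -/
import Mathlib

section
/- Let ι(x) = |x|^{-2} x denote geometric inversion on ℝ^d \ {0}. If ν is a Lévy measure on ℝ^d (i.e. ν({0}) = 0 and ∫ (|x|² ∧ 1) ν(dx) < ∞), then the measure ν'(B) = ∫_{ℝ^d \ {0}} 1_B(ι(x)) |x|² ν(dx) is also a Lévy measure, and moreover ∫ (|x|² ∧ 1) ν'(dx) = ∫ (|x|² ∧ 1) ν(dx). -/
open MeasureTheory Set
open scoped ENNReal
noncomputable section

/-- `ℝ^d` with the Euclidean norm. -/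
abbrev Rd (d : ℕ) := EuclideanSpace ℝ (Fin d)

/-- Geometric inversion `ι(x) = |x|⁻² x` (with the junk value `ι(0) = 0`). -/
def iota {d : ℕ} (x : Rd d) : Rd d := (‖x‖ ^ 2)⁻¹ • x

/-- A Lévy measure on `ℝ^d`: `ν({0}) = 0` and `∫ (|x|² ∧ 1) ν(dx) < ∞`. -/
def IsLevyMeasure {d : ℕ} (ν : Measure (Rd d)) : Prop :=
  ν {0} = 0 ∧ (∫⁻ x, ENNReal.ofReal (min (‖x‖ ^ 2) 1) ∂ν) < ⊤

/-- The inversion `ν'` of a Lévy measure: `ν'(B) = ∫ 1_B(ι(x)) |x|² ν(dx)`. -/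
def invLevy {d : ℕ} (ν : Measure (Rd d)) : Measure (Rd d) :=
  Measure.map iota ((ν.restrict {0}ᶜ).withDensity fun x => ENNReal.ofReal (‖x‖ ^ 2))

lemma iota_measurable {d : ℕ} : Measurable (iota (d := d)) := by
  unfold iota
  exact ((measurable_norm.pow_const 2).inv).smul measurable_id

lemma iota_eq_zero_iff {d : ℕ} (x : Rd d) : iota x = 0 ↔ x = 0 := by
  constructor
  · intro h
    by_contra hx
    have hnx : ‖x‖ ≠ 0 := norm_ne_zero_iff.mpr hx
    have : (‖x‖ ^ 2)⁻¹ ≠ 0 := by positivity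
    exact hx (by simpa [iota, smul_eq_zero, this] using h)
  · rintro rfl; simp [iota]

lemma norm_iota {d : ℕ} (x : Rd d) (hx : x ≠ 0) : ‖iota x‖ = ‖x‖⁻¹ := by
  have hnx : ‖x‖ ≠ 0 := norm_ne_zero_iff.mpr hx
  rw [iota, norm_smul, norm_inv, norm_pow, norm_norm, pow_two]
  field_simp

theorem statement0 {d : ℕ} (ν : Measure (Rd d)) (hν : IsLevyMeasure ν) :
    IsLevyMeasure (invLevy ν) ∧
      (∫⁻ x, ENNReal.ofReal (min (‖x‖ ^ 2) 1) ∂(invLevy ν))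
        = ∫⁻ x, ENNReal.ofReal (min (‖x‖ ^ 2) 1) ∂ν := by
  obtain ⟨h0, hfin⟩ := hν
  set μ := (ν.restrict {0}ᶜ).withDensity fun x => ENNReal.ofReal (‖x‖ ^ 2) with hμ
  have hg : Measurable fun x : Rd d => ENNReal.ofReal (‖x‖ ^ 2) :=
    (measurable_norm.pow_const 2).ennreal_ofReal
  have hf : Measurable fun x : Rd d => ENNReal.ofReal (min (‖x‖ ^ 2) 1) :=
    ((measurable_norm.pow_const 2).min measurable_const).ennreal_ofReal
  -- key integral equality
  have key : (∫⁻ x, ENNReal.ofReal (min (‖x‖ ^ 2) 1) ∂(invLevy ν))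
      = ∫⁻ x, ENNReal.ofReal (min (‖x‖ ^ 2) 1) ∂ν := by
    rw [invLevy, lintegral_map hf iota_measurable,
      lintegral_withDensity_eq_lintegral_mul _ hg (show Measurable fun a : Rd d => ENNReal.ofReal (min (‖iota a‖ ^ 2) 1) from hf.comp iota_measurable)]
    have hcongr : ∀ x ∈ ({0}ᶜ : Set (Rd d)),
        (ENNReal.ofReal (‖x‖ ^ 2) * ENNReal.ofReal (min (‖iota x‖ ^ 2) 1))
          = ENNReal.ofReal (min (‖x‖ ^ 2) 1) := by
      intro x hx
      have hx0 : x ≠ 0 := hx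
      have hnx : (0:ℝ) < ‖x‖ := norm_pos_iff.mpr hx0
      rw [norm_iota x hx0, ← ENNReal.ofReal_mul (by positivity)]
      congr 1
      rw [inv_pow]
      rcases le_total (‖x‖ ^ 2) 1 with h | h
      · have h1 : (1:ℝ) ≤ (‖x‖ ^ 2)⁻¹ := by
          rw [le_inv_comm₀ one_pos (by positivity)]; simpa using h
        rw [min_eq_right h1, min_eq_left h, mul_one]
      · have h1 : (‖x‖ ^ 2)⁻¹ ≤ 1 := by
          rw [inv_le_one_iff₀]; right; exact h
        rw [min_eq_left h1, min_eq_right h, mul_inv_cancel₀ (by positivity)]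
    calc (∫⁻ x, ENNReal.ofReal (‖x‖ ^ 2)
            * ENNReal.ofReal (min (‖iota x‖ ^ 2) 1) ∂(ν.restrict {0}ᶜ))
        = ∫⁻ x in {0}ᶜ, ENNReal.ofReal (min (‖x‖ ^ 2) 1) ∂ν := by
          exact setLIntegral_congr_fun (measurableSet_singleton 0).compl
            hcongr
      _ = ∫⁻ x, ENNReal.ofReal (min (‖x‖ ^ 2) 1) ∂ν := by
          conv_rhs => rw [← lintegral_add_compl _ (measurableSet_singleton (0 : Rd d))]
          rw [setLIntegral_measure_zero _ _ h0, zero_add]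
  refine ⟨⟨?_, key ▸ hfin⟩, key⟩
  rw [invLevy, Measure.map_apply iota_measurable (measurableSet_singleton 0)]
  have hpre : iota ⁻¹' ({0} : Set (Rd d)) = {0} := by
    ext x; simp [iota_eq_zero_iff]
  rw [hpre, withDensity_apply _ (measurableSet_singleton 0),
    Measure.restrict_restrict (measurableSet_singleton 0)]
  simp
end
end

section
/- Suppose α ∈ ℝ is such that for every Lévy measure ν on ℝ^d, the measure ν^♯(B) = ∫_{ℝ^d \ {0}} 1_B(ι(x)) |x|^α ν(dx) is again a Lévy measure (where ι(x) = |x|^{-2}x). Then α = 2. -/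
open MeasureTheory Set
open scoped ENNReal
noncomputable section

theorem statement5 {d : ℕ} (hd : 1 ≤ d) (α : ℝ)
    (H : ∀ ν : Measure (Rd d), IsLevyMeasure ν →
      IsLevyMeasure (Measure.map iota
        ((ν.restrict {0}ᶜ).withDensity fun x => ENNReal.ofReal (‖x‖ ^ α)))) :
    α = 2 := by
  classical
  by_contra hα
  have hα2 : α - 2 ≠ 0 := sub_ne_zero.mpr hα
  -- unit vector
  set e : Rd d := EuclideanSpace.single (⟨0, hd⟩ : Fin d) (1:ℝ) with he
  have hnorme : ‖e‖ = 1 := by rw [he, EuclideanSpace.norm_single]; norm_num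
  -- scales
  set s : ℕ → ℝ := fun n => (2:ℝ) ^ ((n:ℝ)/(α-2)) with hsdef
  have hspos : ∀ n, 0 < s n := fun n => Real.rpow_pos_of_pos two_pos _
  set c : ℕ → ℝ := fun n => s n ^ (-α) * max (s n ^ 2) 1 with hcdef
  have hcpos : ∀ n, 0 < c n := fun n =>
    mul_pos (Real.rpow_pos_of_pos (hspos n) _) (lt_max_of_lt_right one_pos)
  set x : ℕ → Rd d := fun n => s n • e with hxdef
  have hxnorm : ∀ n, ‖x n‖ = s n := by
    intro n
    rw [hxdef]
    simp only [norm_smul, Real.norm_eq_abs, hnorme, mul_one, abs_of_pos (hspos n)]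
  have hxne : ∀ n, x n ≠ 0 := by
    intro n h
    have := hxnorm n
    rw [h, norm_zero] at this
    exact (hspos n).ne this
  set ν : Measure (Rd d) :=
    Measure.sum (fun n => (ENNReal.ofReal (c n)) • Measure.dirac (x n)) with hν
  -- lintegral formula
  have hint : ∀ f : Rd d → ℝ≥0∞, Measurable f →
      ∫⁻ y, f y ∂ν = ∑' n, ENNReal.ofReal (c n) * f (x n) := by
    intro f hf
    rw [hν, lintegral_sum_measure]
    congr 1
    ext n
    rw [lintegral_smul_measure, lintegral_dirac' _ hf, smul_eq_mul]
  -- restrict is ν itself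
  have hres : ν.restrict {0}ᶜ = ν := by
    rw [hν, Measure.restrict_sum _ (MeasurableSet.compl (measurableSet_singleton 0))]
    congr 1
    funext n
    rw [Measure.restrict_smul, restrict_dirac]
    simp [hxne n]
  -- key real identities
  have hmaxmin : ∀ n, max (s n ^ 2) 1 * min ((s n)⁻¹ ^ 2) 1 = 1 := by
    intro n
    rcases le_total (s n) 1 with h | h
    · have h2 : s n ^ 2 ≤ 1 := by nlinarith [hspos n]
      have h3 : (1:ℝ) ≤ (s n)⁻¹ ^ 2 := by
        have hi : (1:ℝ) ≤ (s n)⁻¹ := (one_le_inv_iff₀).mpr ⟨hspos n, h⟩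
        nlinarith
      rw [max_eq_right h2, min_eq_right h3, one_mul]
    · have h2 : (1:ℝ) ≤ s n ^ 2 := by nlinarith
      have h3 : (s n)⁻¹ ^ 2 ≤ 1 := by
        have hi : (s n)⁻¹ ≤ 1 := inv_le_one_of_one_le₀ h
        have hi0 : (0:ℝ) ≤ (s n)⁻¹ := by positivity
        nlinarith
      rw [max_eq_left h2, min_eq_left h3, ← mul_pow]
      rw [mul_inv_cancel₀ (hspos n).ne', one_pow]
  have hlevyterm : ∀ n, c n * min (s n ^ 2) 1 = (1/2 : ℝ) ^ n := by
    intro n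
    have h1 : max (s n ^ 2) 1 * min (s n ^ 2) 1 = s n ^ 2 := by
      rcases le_total (s n ^ 2) 1 with h | h
      · rw [max_eq_right h, min_eq_left h, one_mul]
      · rw [max_eq_left h, min_eq_right h, mul_one]
    rw [hcdef]
    simp only
    rw [mul_assoc, h1]
    have h2 : s n ^ (2:ℕ) = s n ^ ((2:ℝ)) := (Real.rpow_two _).symm
    rw [h2, ← Real.rpow_add (hspos n)]
    rw [hsdef]
    simp only
    rw [← Real.rpow_mul (by norm_num : (0:ℝ) ≤ 2)]
    have hexp : ((n:ℝ)/(α-2)) * (-α+2) = -(n:ℝ) := by field_simp; ring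
    rw [hexp, Real.rpow_neg (by norm_num : (0:ℝ) ≤ 2), Real.rpow_natCast, one_div, inv_pow]
  have hmapterm : ∀ n, c n * (s n ^ α * min ((s n)⁻¹ ^ 2) 1) = 1 := by
    intro n
    have h0 : s n ^ (-α) * s n ^ α = 1 := by
      rw [← Real.rpow_add (hspos n)]; simp
    have h2 : c n * (s n ^ α * min ((s n)⁻¹ ^ 2) 1)
        = (s n ^ (-α) * s n ^ α) * (max (s n ^ 2) 1 * min ((s n)⁻¹ ^ 2) 1) := by
      rw [hcdef]; ring
    rw [h2, h0, hmaxmin n, one_mul]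
  -- measurability of the Lévy integrand
  have hf : Measurable (fun y : Rd d => ENNReal.ofReal (min (‖y‖ ^ 2) 1)) := by fun_prop
  -- ν is a Lévy measure
  have hLevy : IsLevyMeasure ν := by
    constructor
    · rw [hν, Measure.sum_apply _ (measurableSet_singleton 0)]
      simp [Measure.dirac_apply, hxne]
    · rw [hint _ hf]
      have hterm : ∀ n, ENNReal.ofReal (c n) * ENNReal.ofReal (min (‖x n‖ ^ 2) 1)
          = ENNReal.ofReal ((1/2 : ℝ) ^ n) := by
        intro n
        rw [← ENNReal.ofReal_mul (hcpos n).le, hxnorm, hlevyterm]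
      simp_rw [hterm]
      rw [← ENNReal.ofReal_tsum_of_nonneg (fun n => by positivity)
        (summable_geometric_of_lt_one (by norm_num) (by norm_num))]
      exact ENNReal.ofReal_lt_top
  -- derive contradiction from mapped measure being Lévy
  have hkey := (H ν hLevy).2
  have hg : Measurable (fun y : Rd d => ENNReal.ofReal (‖y‖ ^ α)) := by fun_prop
  have hfi : Measurable fun a : Rd d => ENNReal.ofReal (min (‖iota a‖ ^ 2) 1) :=
    hf.comp iota_measurable
  rw [lintegral_map hf iota_measurable,
    lintegral_withDensity_eq_lintegral_mul _ hg hfi, hres] at hkey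
  simp only [Pi.mul_apply] at hkey
  rw [hint (fun a => ENNReal.ofReal (‖a‖ ^ α) * ENNReal.ofReal (min (‖iota a‖ ^ 2) 1)) (hg.mul hfi)] at hkey
  have hterm : ∀ n, ENNReal.ofReal (c n) *
      (ENNReal.ofReal (‖x n‖ ^ α) * ENNReal.ofReal (min (‖iota (x n)‖ ^ 2) 1))
      = 1 := by
    intro n
    rw [← ENNReal.ofReal_mul (by positivity), ← ENNReal.ofReal_mul (hcpos n).le,
      norm_iota _ (hxne n), hxnorm, hmapterm n, ENNReal.ofReal_one]
  simp_rw [hterm] at hkey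
  rw [ENNReal.tsum_const_eq_top_of_ne_zero one_ne_zero] at hkey
  exact (lt_irrefl _ hkey)
end
end

section
/- Let h : (a,b) → (0,∞) satisfy Condition (C), let g(t) = ∫_t^b h(u) du, let c = lim_{t↓a} g(t), and let f : (0,c) → (a,b) be the inverse function of g. Then for every u ∈ (0,c), ∫_u^c f(s)² ds = ∫_a^{f(u)} h(t) t² dt; in particular, if ∫_a^b h(u)u² du < ∞ then ∫_0^c f(s)² ds < ∞. -/
open MeasureTheory Set Filter Topology
open scoped ENNReal
noncomputable section

/-- `g(t) = ∫_t^b h(u) du` (with `b` possibly `∞`). -/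
def gInt (b : EReal) (h : ℝ → ℝ) (t : ℝ) : ℝ :=
  (∫⁻ u in {u : ℝ | t < u ∧ (u : EReal) < b}, ENNReal.ofReal (h u)).toReal

theorem statement10 (a b : EReal) (ha : 0 ≤ a) (hab : a < b)
    (h : ℝ → ℝ) (hmeas : Measurable h)
    (hpos : ∀ u : ℝ, a < (u : EReal) → (u : EReal) < b → 0 < h u)
    (hC : (∫⁻ u in {u : ℝ | a < (u : EReal) ∧ (u : EReal) < b},
              ENNReal.ofReal (h u * u ^ 2)) < ⊤ ∨
          (∫⁻ u in {u : ℝ | a < (u : EReal) ∧ (u : EReal) < b},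
              ENNReal.ofReal (h u)) < ⊤)
    -- `c = g(a+) = ∫_a^b h(u) du`, possibly `∞`
    (c : ℝ≥0∞)
    (hc : c = ∫⁻ u in {u : ℝ | a < (u : EReal) ∧ (u : EReal) < b}, ENNReal.ofReal (h u))
    -- `f : (0,c) → (a,b)` is the inverse function of `g`
    (f : ℝ → ℝ)
    (hf₁ : ∀ t : ℝ, a < (t : EReal) → (t : EReal) < b → f (gInt b h t) = t)
    (hf₂ : ∀ s : ℝ, 0 < s → ENNReal.ofReal s < c →
      (a < ((f s : ℝ) : EReal) ∧ ((f s : ℝ) : EReal) < b) ∧ gInt b h (f s) = s) :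
    (∀ u : ℝ, 0 < u → ENNReal.ofReal u < c →
      (∫⁻ s in {s : ℝ | u < s ∧ ENNReal.ofReal s < c}, ENNReal.ofReal (f s ^ 2))
        = ∫⁻ t in {t : ℝ | a < (t : EReal) ∧ t < f u}, ENNReal.ofReal (h t * t ^ 2)) ∧
    ((∫⁻ u in {u : ℝ | a < (u : EReal) ∧ (u : EReal) < b},
        ENNReal.ofReal (h u * u ^ 2)) < ⊤ →
      (∫⁻ s in {s : ℝ | 0 < s ∧ ENNReal.ofReal s < c}, ENNReal.ofReal (f s ^ 2)) < ⊤) := by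
  classical
  -- basic EReal bookkeeping
  have habot : a ≠ ⊥ := (lt_of_lt_of_le EReal.bot_lt_zero ha).ne'
  have hatop : a ≠ ⊤ := (hab.trans_le le_top).ne
  set A : ℝ := a.toReal with hAdef
  have haA : (A : EReal) = a := EReal.coe_toReal hatop habot
  have hA0 : (0 : ℝ) ≤ A := by
    have h0 := ha; rw [← haA] at h0; exact_mod_cast h0
  have hlt : ∀ t : ℝ, (a < (t : EReal)) ↔ A < t := fun t => by
    rw [← haA, EReal.coe_lt_coe_iff]
  have hIb : MeasurableSet {t : ℝ | (t : EReal) < b} :=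
    measurable_coe_real_ereal measurableSet_Iio
  -- the tail integral G
  set G : ℝ → ℝ≥0∞ := fun x => ∫⁻ t in {t : ℝ | x < t ∧ (t : EReal) < b},
    ENNReal.ofReal (h t) with hGdef
  have hGm : ∀ x : ℝ, MeasurableSet {t : ℝ | x < t ∧ (t : EReal) < b} := fun x => by
    have : {t : ℝ | x < t ∧ (t : EReal) < b} = Ioi x ∩ {t : ℝ | (t : EReal) < b} := rfl
    rw [this]; exact measurableSet_Ioi.inter hIb
  have hcA : c = G A := by
    have hsets : {u : ℝ | a < (u : EReal) ∧ (u : EReal) < b}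
        = {t : ℝ | A < t ∧ (t : EReal) < b} :=
      Set.ext fun t => and_congr_left' (hlt t)
    rw [hc, hsets]
  have hsplit : ∀ x y : ℝ, x < y → (y : EReal) < b →
      G x = (∫⁻ t in Ioc x y, ENNReal.ofReal (h t)) + G y := by
    intro x y hxy hyb
    have hset : {t : ℝ | x < t ∧ (t : EReal) < b}
        = Ioc x y ∪ {t : ℝ | y < t ∧ (t : EReal) < b} := by
      ext t
      simp only [mem_setOf_eq, mem_union, mem_Ioc]
      constructor
      · rintro ⟨hxt, htb⟩
        rcases le_or_gt t y with h' | h'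
        · exact Or.inl ⟨hxt, h'⟩
        · exact Or.inr ⟨h', htb⟩
      · rintro (⟨hxt, hty⟩ | ⟨hyt, htb⟩)
        · exact ⟨hxt, lt_of_le_of_lt (EReal.coe_le_coe_iff.2 hty) hyb⟩
        · exact ⟨hxy.trans hyt, htb⟩
    have hdisj : Disjoint (Ioc x y) {t : ℝ | y < t ∧ (t : EReal) < b} := by
      rw [Set.disjoint_left]
      rintro t ⟨_, hty⟩ ⟨hyt, _⟩
      exact absurd hyt (not_lt.2 hty)
    simp only [hGdef]
    rw [hset, lintegral_union (hGm y) hdisj]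
  have hposIoc : ∀ x y : ℝ, A ≤ x → x < y → (y : EReal) < b →
      0 < ∫⁻ t in Ioc x y, ENNReal.ofReal (h t) := by
    intro x y hAx hxy hyb
    rcases eq_or_lt_of_le (show (0:ℝ≥0∞) ≤ ∫⁻ t in Ioc x y, ENNReal.ofReal (h t) from zero_le) with h0 | h0
    · exfalso
      have h0' := h0.symm
      rw [lintegral_eq_zero_iff hmeas.ennreal_ofReal] at h0'
      rw [EventuallyEq, ae_restrict_iff' measurableSet_Ioc] at h0'
      have hae : ∀ᵐ t : ℝ, t ∉ Ioc x y := by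
        filter_upwards [h0'] with t ht hmem
        have htpos : 0 < h t := hpos t ((hlt t).2 (lt_of_le_of_lt hAx hmem.1))
          (lt_of_le_of_lt (EReal.coe_le_coe_iff.2 hmem.2) hyb)
        have := ht hmem
        simp only [Pi.zero_apply] at this
        exact absurd this (ENNReal.ofReal_pos.2 htpos).ne'
      rw [ae_iff] at hae
      simp only [not_not, Set.setOf_mem_eq, Real.volume_Ioc] at hae
      exact absurd hae (ENNReal.ofReal_pos.2 (sub_pos.2 hxy)).ne'
    · exact h0
  have hGfin : ∀ x : ℝ, A < x → (x : EReal) < b → G x ≠ ⊤ := by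
    intro x hAx hxb
    rcases hC with hC | hC
    · intro hGtop
      have hx0 : 0 < x := lt_of_le_of_lt hA0 hAx
      have key : ENNReal.ofReal (x ^ 2) * G x
          ≤ ∫⁻ u in {u : ℝ | a < (u : EReal) ∧ (u : EReal) < b},
              ENNReal.ofReal (h u * u ^ 2) := by
        simp only [hGdef]
        rw [← lintegral_const_mul' _ _ ENNReal.ofReal_ne_top]
        refine le_trans (setLIntegral_mono (g := fun t : ℝ => ENNReal.ofReal (h t * t ^ 2))
          ((hmeas.mul (measurable_id.pow_const 2)).ennreal_ofReal)
          fun t ht => ?_) (lintegral_mono_set fun t ht => ?_)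
        · have ht1 : x < t := ht.1
          have htpos : 0 < h t := hpos t ((hlt t).2 (hAx.trans ht1)) ht.2
          rw [← ENNReal.ofReal_mul (by positivity)]
          have hx2 : x ^ 2 ≤ t ^ 2 := by nlinarith
          refine ENNReal.ofReal_le_ofReal ?_
          nlinarith [mul_le_mul_of_nonneg_right hx2 htpos.le]
        · exact ⟨(hlt t).2 (hAx.trans ht.1), ht.2⟩
      rw [hGtop, ENNReal.mul_top (ENNReal.ofReal_pos.2 (by positivity : (0:ℝ) < x ^ 2)).ne'] at key
      exact absurd (top_le_iff.1 key) hC.ne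
    · refine (lt_of_le_of_lt (lintegral_mono_set fun t ht => ?_) hC).ne
      exact ⟨(hlt t).2 (hAx.trans ht.1), ht.2⟩
  have hGanti : ∀ {x y : ℝ}, x ≤ y → G y ≤ G x := fun {x y} hxy =>
    lintegral_mono_set fun t ht => ⟨lt_of_le_of_lt hxy ht.1, ht.2⟩
  have hGstrict : ∀ x y : ℝ, A < x → x < y → (y : EReal) < b → G y < G x := by
    intro x y hAx hxy hyb
    rw [hsplit x y hxy hyb, add_comm]
    exact ENNReal.lt_add_right (hGfin y (hAx.trans hxy) hyb) (hposIoc x y hAx.le hxy hyb).ne'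
  -- properties of f
  have hfm : ∀ s : ℝ, 0 < s → ENNReal.ofReal s < c →
      A < f s ∧ ((f s : ℝ) : EReal) < b ∧ G (f s) = ENNReal.ofReal s := by
    intro s hs hsc
    obtain ⟨⟨h1, h2⟩, h3⟩ := hf₂ s hs hsc
    have hfs : A < f s := (hlt _).1 h1
    have hfin := hGfin _ hfs h2
    refine ⟨hfs, h2, ?_⟩
    have heq : gInt b h (f s) = (G (f s)).toReal := by simp only [gInt, hGdef]
    rw [heq] at h3
    rw [← ENNReal.ofReal_toReal hfin, h3]
  have hanti : ∀ u : ℝ, 0 ≤ u →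
      AntitoneOn f {s : ℝ | u < s ∧ ENNReal.ofReal s < c} := by
    intro u hu s1 hs1 s2 hs2 h12
    rcases eq_or_lt_of_le h12 with rfl | hlt12
    · exact le_refl _
    by_contra hcon
    push_neg at hcon
    have m1 := hfm s1 (lt_of_le_of_lt hu hs1.1) hs1.2
    have m2 := hfm s2 (lt_of_le_of_lt hu hs2.1) hs2.2
    have hle := hGanti hcon.le
    rw [m1.2.2, m2.2.2] at hle
    exact absurd hle (not_le.2 ((ENNReal.ofReal_lt_ofReal_iff
      (lt_of_le_of_lt hu hs2.1)).2 hlt12))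
  have hSm : ∀ u : ℝ, MeasurableSet {s : ℝ | u < s ∧ ENNReal.ofReal s < c} := by
    intro u
    have : {s : ℝ | u < s ∧ ENNReal.ofReal s < c}
        = Ioi u ∩ ENNReal.ofReal ⁻¹' (Iio c) := rfl
    rw [this]
    exact measurableSet_Ioi.inter (ENNReal.measurable_ofReal measurableSet_Iio)
  have hqm : Measurable fun y : ℝ => ENNReal.ofReal (y ^ 2) :=
    (measurable_id.pow_const 2).ennreal_ofReal
  -- volume of the s-domain
  have hSval : ∀ u : ℝ, 0 < u → ENNReal.ofReal u < c →
      volume {s : ℝ | u < s ∧ ENNReal.ofReal s < c} = c - ENNReal.ofReal u := by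
    intro u hu huc
    rcases eq_or_ne c ⊤ with rfl | hcne
    · have hset : {s : ℝ | u < s ∧ ENNReal.ofReal s < ⊤} = Ioi u := by
        ext s; simp [ENNReal.ofReal_lt_top]
      rw [hset, Real.volume_Ioi]
      rw [ENNReal.sub_eq_top_iff.2 ⟨rfl, ENNReal.ofReal_ne_top⟩]
    · have hset : {s : ℝ | u < s ∧ ENNReal.ofReal s < c} = Ioo u c.toReal := by
        ext s
        simp only [mem_setOf_eq, mem_Ioo]
        constructor
        · rintro ⟨h1, h2⟩
          refine ⟨h1, ?_⟩
          rw [← ENNReal.ofReal_toReal hcne] at h2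
          exact (ENNReal.ofReal_lt_ofReal_iff_of_nonneg (hu.trans h1).le).1 h2
        · rintro ⟨h1, h2⟩
          refine ⟨h1, ?_⟩
          rw [← ENNReal.ofReal_toReal hcne]
          exact (ENNReal.ofReal_lt_ofReal_iff_of_nonneg (hu.trans h1).le).2 h2
      rw [hset, Real.volume_Ioo, ENNReal.ofReal_sub _ hu.le, ENNReal.ofReal_toReal hcne]
  -- the key distribution identity
  have hkey : ∀ u : ℝ, 0 < u → ENNReal.ofReal u < c → ∀ x : ℝ, 0 < x →
      volume ({s : ℝ | x < f s} ∩ {s : ℝ | u < s ∧ ENNReal.ofReal s < c})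
        = ∫⁻ t in Ioi x ∩ Ioo A (f u), ENNReal.ofReal (h t) := by
    intro u hu huc x hx
    obtain ⟨hAfu, hfub, hGfu⟩ := hfm u hu huc
    rcases le_or_gt (f u) x with hfux | hxfu
    · -- both sides vanish
      have e1 : {s : ℝ | x < f s} ∩ {s : ℝ | u < s ∧ ENNReal.ofReal s < c} = ∅ := by
        ext s
        simp only [mem_inter_iff, mem_setOf_eq, mem_empty_iff_false, iff_false]
        rintro ⟨hxfs, hus, hsc⟩
        obtain ⟨hAs, hsb, hGs⟩ := hfm s (hu.trans hus) hsc
        have hne : ¬ f u ≤ f s := by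
          intro hle
          have hle' := hGanti hle
          rw [hGs, hGfu] at hle'
          exact absurd hle' (not_le.2 ((ENNReal.ofReal_lt_ofReal_iff (hu.trans hus)).2 hus))
        exact hne (hfux.trans hxfs.le)
      have e2 : Ioi x ∩ Ioo A (f u) = ∅ := by
        ext t
        simp only [mem_inter_iff, mem_Ioi, mem_Ioo, mem_empty_iff_false, iff_false]
        rintro ⟨h1, _, h3⟩
        exact absurd (hfux.trans h1.le) (not_le.2 h3)
      rw [e1, e2]
      simp
    rcases le_or_gt x A with hxA | hAx
    · -- 0 < x ≤ A
      have e1 : {s : ℝ | x < f s} ∩ {s : ℝ | u < s ∧ ENNReal.ofReal s < c}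
          = {s : ℝ | u < s ∧ ENNReal.ofReal s < c} :=
        inter_eq_right.2 fun s hs => lt_of_le_of_lt hxA (hfm s (hu.trans hs.1) hs.2).1
      have e2 : Ioi x ∩ Ioo A (f u) = Ioo A (f u) :=
        inter_eq_right.2 fun t ht => lt_of_le_of_lt hxA ht.1
      rw [e1, e2, hSval u hu huc]
      have hIooIoc : ∫⁻ t in Ioo A (f u), ENNReal.ofReal (h t)
          = ∫⁻ t in Ioc A (f u), ENNReal.ofReal (h t) := setLIntegral_congr Ioo_ae_eq_Ioc
      rw [hIooIoc]
      have hspl := hsplit A (f u) hAfu hfub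
      rw [← hcA, hGfu] at hspl
      rw [hspl, ENNReal.add_sub_cancel_right ENNReal.ofReal_ne_top]
    · -- A < x < f u
      have hxb : (x : EReal) < b := lt_trans (EReal.coe_lt_coe_iff.2 hxfu) hfub
      have hGxfin := hGfin x hAx hxb
      have hGxu : ENNReal.ofReal u < G x := by
        rw [← hGfu]; exact hGstrict x (f u) hAx hxfu hfub
      have hugx : u < (G x).toReal := by
        have h' := (ENNReal.toReal_lt_toReal ENNReal.ofReal_ne_top hGxfin).2 hGxu
        rwa [ENNReal.toReal_ofReal hu.le] at h'
      have hGxc : G x ≤ c := by rw [hcA]; exact hGanti hAx.le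
      have e1 : {s : ℝ | x < f s} ∩ {s : ℝ | u < s ∧ ENNReal.ofReal s < c}
          = Ioo u (G x).toReal := by
        ext s
        simp only [mem_inter_iff, mem_setOf_eq, mem_Ioo]
        constructor
        · rintro ⟨hxfs, hus, hsc⟩
          refine ⟨hus, ?_⟩
          obtain ⟨hAs, hsb, hGs⟩ := hfm s (hu.trans hus) hsc
          have hlt' := hGstrict x (f s) hAx hxfs hsb
          rw [hGs] at hlt'
          have h' := (ENNReal.toReal_lt_toReal ENNReal.ofReal_ne_top hGxfin).2 hlt'
          rwa [ENNReal.toReal_ofReal (hu.trans hus).le] at h'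
        · rintro ⟨hus, hsgx⟩
          have hs0 : 0 < s := hu.trans hus
          have hsGx : ENNReal.ofReal s < G x := by
            rw [← ENNReal.ofReal_toReal hGxfin]
            exact (ENNReal.ofReal_lt_ofReal_iff (hu.trans hugx)).2 hsgx
          have hsc : ENNReal.ofReal s < c := lt_of_lt_of_le hsGx hGxc
          obtain ⟨hAs, hsb, hGs⟩ := hfm s hs0 hsc
          refine ⟨?_, hus, hsc⟩
          by_contra hcon
          push_neg at hcon
          have hle' := hGanti hcon
          rw [hGs] at hle'
          exact absurd hsGx (not_lt.2 hle')
      have e2 : Ioi x ∩ Ioo A (f u) = Ioo x (f u) := by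
        ext t
        simp only [mem_inter_iff, mem_Ioi, mem_Ioo]
        constructor
        · rintro ⟨h1, _, h3⟩; exact ⟨h1, h3⟩
        · rintro ⟨h1, h2⟩; exact ⟨h1, hAx.trans h1, h2⟩
      rw [e1, e2, Real.volume_Ioo]
      have hIooIoc : ∫⁻ t in Ioo x (f u), ENNReal.ofReal (h t)
          = ∫⁻ t in Ioc x (f u), ENNReal.ofReal (h t) := setLIntegral_congr Ioo_ae_eq_Ioc
      have hspl := hsplit x (f u) hxfu hfub
      rw [hGfu] at hspl
      have hval : ∫⁻ t in Ioc x (f u), ENNReal.ofReal (h t) = G x - ENNReal.ofReal u := by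
        rw [hspl, ENNReal.add_sub_cancel_right ENNReal.ofReal_ne_top]
      have hsub : G x - ENNReal.ofReal u = ENNReal.ofReal ((G x).toReal - u) := by
        rw [ENNReal.ofReal_sub _ hu.le, ENNReal.ofReal_toReal hGxfin]
      rw [hIooIoc, hval, hsub]
  -- the main identity
  have hmain : ∀ u : ℝ, 0 < u → ENNReal.ofReal u < c →
      (∫⁻ s in {s : ℝ | u < s ∧ ENNReal.ofReal s < c}, ENNReal.ofReal (f s ^ 2))
        = ∫⁻ t in {t : ℝ | a < (t : EReal) ∧ t < f u}, ENNReal.ofReal (h t * t ^ 2) := by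
    intro u hu huc
    obtain ⟨hAfu, hfub, hGfu⟩ := hfm u hu huc
    set S : Set ℝ := {s : ℝ | u < s ∧ ENNReal.ofReal s < c} with hSdef
    set ν : Measure ℝ := (volume.restrict (Ioo A (f u))).withDensity
      fun t => ENNReal.ofReal (h t) with hνdef
    have hνapp : ∀ x : ℝ, ν {t : ℝ | x < t} = ∫⁻ t in Ioi x ∩ Ioo A (f u),
        ENNReal.ofReal (h t) := by
      intro x
      have : {t : ℝ | x < t} = Ioi x := rfl
      rw [hνdef, this, withDensity_apply _ measurableSet_Ioi,
        Measure.restrict_restrict measurableSet_Ioi]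
    -- left side via the layer cake formula
    have hfae : AEMeasurable f (volume.restrict S) :=
      aemeasurable_restrict_of_antitoneOn (hSm u) (hanti u hu.le)
    have hfnn : 0 ≤ᵐ[volume.restrict S] f := by
      rw [EventuallyLE, ae_restrict_iff' (hSm u)]
      exact ae_of_all _ fun s hs => hA0.trans (hfm s (hu.trans hs.1) hs.2).1.le
    have L := lintegral_rpow_eq_lintegral_meas_lt_mul (volume.restrict S) hfnn hfae
      (p := 2) two_pos
    simp only [Real.rpow_two] at L
    have hexp : ∀ x : ℝ, x ^ (2 - 1 : ℝ) = x := by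
      intro x; norm_num
    simp only [hexp, Measure.restrict_apply' (show MeasurableSet S from hSm u)] at L
    -- right side via the layer cake formula for ν
    have hνnn : 0 ≤ᵐ[ν] (fun t : ℝ => t) := by
      have h1 : ∀ᵐ t ∂(volume.restrict (Ioo A (f u))), 0 ≤ t := by
        rw [ae_restrict_iff' measurableSet_Ioo]
        exact ae_of_all _ fun t ht => hA0.trans ht.1.le
      exact h1.filter_mono (withDensity_absolutelyContinuous _ _).ae_le
    have R := lintegral_rpow_eq_lintegral_meas_lt_mul ν hνnn aemeasurable_id
      (p := 2) two_pos
    simp only [Real.rpow_two, id_eq] at R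
    simp only [hexp] at R
    have hTset : {t : ℝ | a < (t : EReal) ∧ t < f u} = Ioo A (f u) :=
      Set.ext fun t => and_congr_left' (hlt t)
    have R1 : ∫⁻ t in {t : ℝ | a < (t : EReal) ∧ t < f u}, ENNReal.ofReal (h t * t ^ 2)
        = ∫⁻ t in Ioo A (f u), ENNReal.ofReal (h t) * ENNReal.ofReal (t ^ 2) := by
      rw [hTset]
      refine setLIntegral_congr_fun measurableSet_Ioo (fun t ht => ?_)
      have htpos : 0 < h t := hpos t ((hlt t).2 ht.1)
        (lt_trans (EReal.coe_lt_coe_iff.2 ht.2) hfub)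
      rw [ENNReal.ofReal_mul htpos.le]
    have R2 : ∫⁻ t in Ioo A (f u), ENNReal.ofReal (h t) * ENNReal.ofReal (t ^ 2)
        = ∫⁻ t, ENNReal.ofReal (t ^ 2) ∂ν := by
      rw [hνdef, lintegral_withDensity_eq_lintegral_mul _ hmeas.ennreal_ofReal hqm]
      simp only [Pi.mul_apply]
    calc ∫⁻ s in S, ENNReal.ofReal (f s ^ 2)
        = ENNReal.ofReal 2 * ∫⁻ x in Ioi 0,
            volume ({s : ℝ | x < f s} ∩ S) * ENNReal.ofReal x := L
      _ = ENNReal.ofReal 2 * ∫⁻ x in Ioi 0,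
            ν {t : ℝ | x < t} * ENNReal.ofReal x := by
          congr 1
          refine setLIntegral_congr_fun measurableSet_Ioi (fun x hx => ?_)
          rw [hkey u hu huc x hx, hνapp x]
      _ = ∫⁻ t, ENNReal.ofReal (t ^ 2) ∂ν := R.symm
      _ = ∫⁻ t in Ioo A (f u), ENNReal.ofReal (h t) * ENNReal.ofReal (t ^ 2) := R2.symm
      _ = ∫⁻ t in {t : ℝ | a < (t : EReal) ∧ t < f u}, ENNReal.ofReal (h t * t ^ 2) := R1.symm
  refine ⟨hmain, ?_⟩
  -- second part
  intro hT
  rcases eq_or_ne c 0 with rfl | hc0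
  · have : {s : ℝ | 0 < s ∧ ENNReal.ofReal s < 0} = ∅ := by
      ext s; simp
    rw [this]
    simp
  · -- choose v with 0 < v and ofReal v < c
    obtain ⟨v, hv0, hvc⟩ : ∃ v : ℝ, 0 < v ∧ ENNReal.ofReal v < c := by
      rcases eq_or_ne c ⊤ with rfl | hcne
      · exact ⟨1, one_pos, by simp [ENNReal.ofReal_lt_top]⟩
      · have hct : 0 < c.toReal := ENNReal.toReal_pos hc0 hcne
        refine ⟨c.toReal / 2, by positivity, ?_⟩
        calc ENNReal.ofReal (c.toReal / 2)
            < ENNReal.ofReal c.toReal :=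
              (ENNReal.ofReal_lt_ofReal_iff hct).2 (half_lt_self hct)
          _ = c := ENNReal.ofReal_toReal hcne
    set w : ℕ → ℝ := fun n => v / (n + 1) with hwdef
    have hw0 : ∀ n : ℕ, 0 < w n := fun n => by positivity
    have hwv : ∀ n : ℕ, w n ≤ v := fun n => by
      have h1 : (1 : ℝ) ≤ (n : ℝ) + 1 := by
        have := Nat.cast_nonneg (α := ℝ) n
        linarith
      simp only [hwdef]
      exact div_le_self hv0.le h1
    have hwc : ∀ n : ℕ, ENNReal.ofReal (w n) < c :=
      fun n => lt_of_le_of_lt (ENNReal.ofReal_le_ofReal (hwv n)) hvc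
    have hwanti : ∀ m n : ℕ, m ≤ n → w n ≤ w m := by
      intro m n hmn
      have h2 : (m : ℝ) + 1 ≤ (n : ℝ) + 1 := by
        have : (m : ℝ) ≤ (n : ℝ) := by exact_mod_cast hmn
        linarith
      simp only [hwdef]
      gcongr
    set q : ℝ → ℝ≥0∞ := fun s => ENNReal.ofReal (f s ^ 2) with hqdef
    set Sn : ℕ → Set ℝ := fun n => {s : ℝ | w n < s ∧ ENNReal.ofReal s < c} with hSndef
    have hSnsub : ∀ n : ℕ, Sn n ⊆ {s : ℝ | 0 < s ∧ ENNReal.ofReal s < c} :=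
      fun n s hs => ⟨(hw0 n).trans hs.1, hs.2⟩
    have hSnmono : ∀ m n : ℕ, m ≤ n → Sn m ⊆ Sn n :=
      fun m n hmn s hs => ⟨lt_of_le_of_lt (hwanti m n hmn) hs.1, hs.2⟩
    have hbound : ∀ n : ℕ, (∫⁻ s in Sn n, q s)
        ≤ ∫⁻ u in {u : ℝ | a < (u : EReal) ∧ (u : EReal) < b},
            ENNReal.ofReal (h u * u ^ 2) := by
      intro n
      rw [hmain (w n) (hw0 n) (hwc n)]
      refine lintegral_mono_set fun t ht => ?_
      exact ⟨ht.1, lt_trans (EReal.coe_lt_coe_iff.2 ht.2)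
        (hfm (w n) (hw0 n) (hwc n)).2.1⟩
    have hup : (∫⁻ s in {s : ℝ | 0 < s ∧ ENNReal.ofReal s < c}, q s)
        = ⨆ n, ∫⁻ s in Sn n, q s := by
      have hindm : ∀ n : ℕ, AEMeasurable ((Sn n).indicator q) volume := by
        intro n
        rw [aemeasurable_indicator_iff (hSm (w n))]
        exact hqm.comp_aemeasurable
          (aemeasurable_restrict_of_antitoneOn (hSm (w n)) (hanti (w n) (hw0 n).le))
      have hmono : ∀ᵐ s : ℝ, Monotone fun n => (Sn n).indicator q s := by
        refine ae_of_all _ fun s m n hmn => ?_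
        exact indicator_le_indicator_of_subset (hSnmono m n hmn) (fun _ => zero_le) s
      have hptwise : ∀ s : ℝ,
          ({s : ℝ | 0 < s ∧ ENNReal.ofReal s < c}).indicator q s
            = ⨆ n, (Sn n).indicator q s := by
        intro s
        rcases Classical.em (s ∈ {s : ℝ | 0 < s ∧ ENNReal.ofReal s < c}) with hs | hs
        · rw [indicator_of_mem hs]
          refine le_antisymm ?_ (iSup_le fun n => ?_)
          · obtain ⟨n, hn⟩ := exists_nat_gt (v / s)
            have hws : w n < s := by
              rw [div_lt_iff₀ hs.1] at hn
              simp only [hwdef]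
              rw [div_lt_iff₀ (by positivity : (0:ℝ) < (n:ℝ) + 1)]
              nlinarith [hs.1, Nat.cast_nonneg (α := ℝ) n]
            have hmem : s ∈ Sn n := ⟨hws, hs.2⟩
            calc q s = (Sn n).indicator q s := (indicator_of_mem hmem q).symm
              _ ≤ ⨆ n, (Sn n).indicator q s := le_iSup (fun n => (Sn n).indicator q s) n
          · rcases Classical.em (s ∈ Sn n) with hsn | hsn
            · rw [indicator_of_mem hsn]
            · rw [indicator_of_notMem hsn]; exact zero_le
        · rw [indicator_of_notMem hs]
          symm
          refine le_antisymm (iSup_le fun n => ?_) zero_le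
          have hsn : s ∉ Sn n := fun hmem => hs (hSnsub n hmem)
          exact le_of_eq (indicator_of_notMem hsn q)
      have hS0m : MeasurableSet {s : ℝ | 0 < s ∧ ENNReal.ofReal s < c} := hSm 0
      calc (∫⁻ s in {s : ℝ | 0 < s ∧ ENNReal.ofReal s < c}, q s)
          = ∫⁻ s, ({s : ℝ | 0 < s ∧ ENNReal.ofReal s < c}).indicator q s :=
            (lintegral_indicator hS0m q).symm
        _ = ∫⁻ s, ⨆ n, (Sn n).indicator q s := by
            refine lintegral_congr fun s => hptwise s
        _ = ⨆ n, ∫⁻ s, (Sn n).indicator q s := lintegral_iSup' hindm hmono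
        _ = ⨆ n, ∫⁻ s in Sn n, q s := by
            refine iSup_congr fun n => lintegral_indicator (hSm (w n)) q
    rw [hup]
    exact lt_of_le_of_lt (iSup_le fun n => hbound n) hT
end
end

section
/- Let p > 0 and let φ : (0,∞) → [0,∞] be locally integrable. Then φ is increasing of order p on (0,∞) if and only if the function u ↦ u^{p−1} φ(1/u) is monotone of order p on (0,∞). -/
open MeasureTheory Set
open scoped ENNReal
noncomputable section

/-- `φ` is monotone of order `p` on `(0,∞)`:
`φ(u) = Γ(p)⁻¹ ∫_{(u,∞)} (r-u)^{p-1} σ(dr)` for `u > 0`, where `σ` is a measure on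
`(0,∞)` that is finite on compact subsets of `(0,∞)`. -/
def MonotoneOfOrderPos (p : ℝ) (φ : ℝ → ℝ≥0∞) : Prop :=
  ∃ σ : Measure ℝ, σ (Iic 0) = 0 ∧
    (∀ s : Set ℝ, IsCompact s → s ⊆ Ioi 0 → σ s < ⊤) ∧
    ∀ u : ℝ, 0 < u → φ u = (ENNReal.ofReal (Real.Gamma p))⁻¹ *
      ∫⁻ r in Ioi u, ENNReal.ofReal ((r - u) ^ (p - 1)) ∂σ

/-- `φ` is increasing of order `p` on `(0,∞)`:
`φ(u) = Γ(p)⁻¹ ∫_{(0,u)} (u-r)^{p-1} σ(dr)` for `u > 0`. -/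
def IncreasingOfOrderPos (p : ℝ) (φ : ℝ → ℝ≥0∞) : Prop :=
  ∃ σ : Measure ℝ, σ (Iic 0) = 0 ∧
    (∀ s : Set ℝ, IsCompact s → s ⊆ Ioi 0 → σ s < ⊤) ∧
    ∀ u : ℝ, 0 < u → φ u = (ENNReal.ofReal (Real.Gamma p))⁻¹ *
      ∫⁻ r in Ioo 0 u, ENNReal.ofReal ((u - r) ^ (p - 1)) ∂σ

namespace Statement12Aux

lemma meas_dens (q : ℝ) : Measurable (fun s : ℝ => ENNReal.ofReal (s ^ q)) := by
  measurability

lemma meas_shift (c q : ℝ) : Measurable (fun s : ℝ => ENNReal.ofReal ((s - c) ^ q)) := by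
  measurability

lemma meas_shift' (c q : ℝ) : Measurable (fun s : ℝ => ENNReal.ofReal ((c - s) ^ q)) := by
  exact (meas_dens q).comp (measurable_const.sub measurable_id)

lemma preimage_inv_Ioi {u : ℝ} (hu : 0 < u) :
    (fun r : ℝ => r⁻¹) ⁻¹' (Ioi u) = Ioo 0 u⁻¹ := by
  ext r
  simp only [mem_preimage, mem_Ioi, mem_Ioo]
  constructor
  · intro h
    have hr : 0 < r := by
      by_contra hr
      push_neg at hr
      have : r⁻¹ ≤ 0 := inv_nonpos.mpr hr
      linarith
    refine ⟨hr, ?_⟩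
    have h1 : u * r < 1 := by
      have := mul_lt_mul_of_pos_right h hr
      rwa [inv_mul_cancel₀ hr.ne'] at this
    rw [← one_div]
    exact (lt_div_iff₀ hu).mpr (by linarith)
  · rintro ⟨hr, hru⟩
    have h1 : u * r < 1 := by
      have := mul_lt_mul_of_pos_left hru hu
      rwa [mul_inv_cancel₀ hu.ne'] at this
    rw [← one_div]
    exact (lt_div_iff₀ hr).mpr h1

lemma preimage_inv_Ioo {u : ℝ} (hu : 0 < u) :
    (fun r : ℝ => r⁻¹) ⁻¹' (Ioo 0 u) = Ioi u⁻¹ := by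
  ext r
  simp only [mem_preimage, mem_Ioo, mem_Ioi]
  constructor
  · rintro ⟨h1, h2⟩
    have hr : 0 < r := inv_pos.mp h1
    have h3 : 1 < u * r := by
      have := mul_lt_mul_of_pos_right h2 hr
      rwa [inv_mul_cancel₀ hr.ne'] at this
    rw [← one_div]
    exact (div_lt_iff₀ hu).mpr (by linarith)
  · intro h
    have hr : 0 < r := lt_trans (inv_pos.mpr hu) h
    refine ⟨inv_pos.mpr hr, ?_⟩
    have h3 : 1 < u * r := by
      have := mul_lt_mul_of_pos_left h hu
      rwa [mul_inv_cancel₀ hu.ne'] at this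
    rw [← one_div]
    exact (div_lt_iff₀ hr).mpr (by linarith)

lemma tau_Iic (p : ℝ) (σ : Measure ℝ) (h0 : σ (Iic 0) = 0) :
    ((σ.map (fun r : ℝ => r⁻¹)).withDensity (fun s => ENNReal.ofReal (s ^ (1 - p))))
      (Iic 0) = 0 := by
  rw [withDensity_apply _ measurableSet_Iic]
  have hmap : (σ.map (fun r : ℝ => r⁻¹)) (Iic 0) = 0 := by
    rw [Measure.map_apply measurable_inv measurableSet_Iic]
    have : (fun r : ℝ => r⁻¹) ⁻¹' (Iic 0) = Iic 0 := by
      ext r; simp [inv_nonpos]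
    rw [this]; exact h0
  rw [Measure.restrict_eq_zero.mpr hmap, lintegral_zero_measure]

lemma tau_locfin (p : ℝ) (σ : Measure ℝ)
    (hfin : ∀ s : Set ℝ, IsCompact s → s ⊆ Ioi 0 → σ s < ⊤) :
    ∀ s : Set ℝ, IsCompact s → s ⊆ Ioi 0 →
      ((σ.map (fun r : ℝ => r⁻¹)).withDensity (fun s => ENNReal.ofReal (s ^ (1 - p)))) s < ⊤ := by
  intro s hs hs0
  rcases s.eq_empty_or_nonempty with rfl | hne
  · simp
  have has : sInf s ∈ s := hs.sInf_mem hne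
  have hbs : sSup s ∈ s := hs.sSup_mem hne
  set a := sInf s
  set b := sSup s
  have ha0 : 0 < a := hs0 has
  have hb0 : 0 < b := hs0 hbs
  have hsub : s ⊆ Icc a b := fun x hx => ⟨csInf_le hs.bddBelow hx, le_csSup hs.bddAbove hx⟩
  set C : ℝ := max (a ^ (1 - p)) (b ^ (1 - p)) with hC
  have hbound : ∀ x ∈ s, ENNReal.ofReal (x ^ (1 - p)) ≤ ENNReal.ofReal C := by
    intro x hx
    apply ENNReal.ofReal_le_ofReal
    rcases le_or_gt 0 (1 - p) with hq | hq
    · exact le_max_of_le_right (Real.rpow_le_rpow (le_of_lt (hs0 hx)) (hsub hx).2 hq)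
    · exact le_max_of_le_left (Real.rpow_le_rpow_of_nonpos ha0 (hsub hx).1 hq.le)
  rw [withDensity_apply _ hs.measurableSet]
  have hmap : (σ.map (fun r : ℝ => r⁻¹)) s < ⊤ := by
    rw [Measure.map_apply measurable_inv hs.measurableSet]
    have hsubset : (fun r : ℝ => r⁻¹) ⁻¹' s ⊆ Icc b⁻¹ a⁻¹ := by
      intro r hr
      have h1 : r⁻¹ ∈ s := hr
      have h2 := hsub h1
      constructor
      · calc b⁻¹ ≤ (r⁻¹)⁻¹ := inv_anti₀ (hs0 h1) h2.2
          _ = r := inv_inv r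
      · calc r = (r⁻¹)⁻¹ := (inv_inv r).symm
          _ ≤ a⁻¹ := inv_anti₀ ha0 h2.1
    exact lt_of_le_of_lt (measure_mono hsubset)
      (hfin _ isCompact_Icc (fun x hx => lt_of_lt_of_le (inv_pos.mpr hb0) hx.1))
  calc ∫⁻ x in s, ENNReal.ofReal (x ^ (1 - p)) ∂(σ.map (fun r : ℝ => r⁻¹))
      ≤ ∫⁻ _ in s, ENNReal.ofReal C ∂(σ.map (fun r : ℝ => r⁻¹)) :=
        setLIntegral_mono measurable_const hbound
    _ = ENNReal.ofReal C * (σ.map (fun r : ℝ => r⁻¹)) s := by rw [setLIntegral_const]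
    _ < ⊤ := ENNReal.mul_lt_top ENNReal.ofReal_lt_top hmap

lemma core1 (p u : ℝ) (hu : 0 < u) (σ : Measure ℝ) :
    ∫⁻ s in Ioi u, ENNReal.ofReal ((s - u) ^ (p - 1))
        ∂((σ.map (fun r : ℝ => r⁻¹)).withDensity (fun s => ENNReal.ofReal (s ^ (1 - p))))
      = ∫⁻ r in Ioo 0 u⁻¹,
          ENNReal.ofReal (u ^ (p - 1)) * ENNReal.ofReal ((u⁻¹ - r) ^ (p - 1)) ∂σ := by
  rw [setLIntegral_withDensity_eq_setLIntegral_mul _ (meas_dens _) (meas_shift u _)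
    measurableSet_Ioi]
  simp only [Pi.mul_apply]
  rw [setLIntegral_map (f := fun s => ENNReal.ofReal (s ^ (1 - p)) * ENNReal.ofReal ((s - u) ^ (p - 1)))
    (g := fun r : ℝ => r⁻¹) measurableSet_Ioi ((meas_dens (1 - p)).mul (meas_shift u (p - 1)))
    measurable_inv]
  rw [preimage_inv_Ioi hu]
  refine setLIntegral_congr_fun measurableSet_Ioo (fun r hr => ?_)
  have hr0 : 0 < r := hr.1
  have h1 : u < r⁻¹ := by
    have : r ∈ (fun r : ℝ => r⁻¹) ⁻¹' (Ioi u) := (preimage_inv_Ioi hu).symm ▸ hr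
    exact this
  have h2 : r < u⁻¹ := hr.2
  rw [← ENNReal.ofReal_mul (Real.rpow_nonneg (inv_nonneg.mpr hr0.le) _),
    ← ENNReal.ofReal_mul (Real.rpow_nonneg hu.le _)]
  congr 1
  have e1 : (r⁻¹ : ℝ) ^ (1 - p) = r ^ (p - 1) := by
    rw [Real.inv_rpow hr0.le, ← Real.rpow_neg hr0.le, show -(1 - p) = p - 1 by ring]
  rw [e1, ← Real.mul_rpow hr0.le (by linarith : (0:ℝ) ≤ r⁻¹ - u),
    ← Real.mul_rpow hu.le (by linarith : (0:ℝ) ≤ u⁻¹ - r)]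
  congr 1
  field_simp

lemma core2 (p u : ℝ) (hu : 0 < u) (σ : Measure ℝ) :
    ∫⁻ r in Ioo 0 u, ENNReal.ofReal ((u - r) ^ (p - 1))
        ∂((σ.map (fun r : ℝ => r⁻¹)).withDensity (fun s => ENNReal.ofReal (s ^ (1 - p))))
      = ∫⁻ s in Ioi u⁻¹,
          ENNReal.ofReal (u ^ (p - 1)) * ENNReal.ofReal ((s - u⁻¹) ^ (p - 1)) ∂σ := by
  rw [setLIntegral_withDensity_eq_setLIntegral_mul _ (meas_dens _) (meas_shift' u _)
    measurableSet_Ioo]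
  simp only [Pi.mul_apply]
  rw [setLIntegral_map (f := fun s => ENNReal.ofReal (s ^ (1 - p)) * ENNReal.ofReal ((u - s) ^ (p - 1)))
    (g := fun r : ℝ => r⁻¹) measurableSet_Ioo ((meas_dens (1 - p)).mul (meas_shift' u (p - 1)))
    measurable_inv]
  rw [preimage_inv_Ioo hu]
  refine setLIntegral_congr_fun measurableSet_Ioi (fun s hs => ?_)
  have hs1 : u⁻¹ < s := hs
  have hs0 : 0 < s := lt_trans (inv_pos.mpr hu) hs1
  have h2 : s⁻¹ < u := by
    have : s ∈ (fun r : ℝ => r⁻¹) ⁻¹' (Ioo 0 u) := (preimage_inv_Ioo hu).symm ▸ hs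
    exact this.2
  rw [← ENNReal.ofReal_mul (Real.rpow_nonneg (inv_nonneg.mpr hs0.le) _),
    ← ENNReal.ofReal_mul (Real.rpow_nonneg hu.le _)]
  congr 1
  have e1 : (s⁻¹ : ℝ) ^ (1 - p) = s ^ (p - 1) := by
    rw [Real.inv_rpow hs0.le, ← Real.rpow_neg hs0.le, show -(1 - p) = p - 1 by ring]
  rw [e1, ← Real.mul_rpow hs0.le (by linarith : (0:ℝ) ≤ u - s⁻¹),
    ← Real.mul_rpow hu.le (by linarith : (0:ℝ) ≤ s - u⁻¹)]
  congr 1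
  field_simp

lemma fwd (p : ℝ) (φ : ℝ → ℝ≥0∞) (h : IncreasingOfOrderPos p φ) :
    MonotoneOfOrderPos p (fun u => ENNReal.ofReal (u ^ (p - 1)) * φ u⁻¹) := by
  obtain ⟨σ, h0, hfin, hrep⟩ := h
  refine ⟨(σ.map (fun r : ℝ => r⁻¹)).withDensity (fun s => ENNReal.ofReal (s ^ (1 - p))),
    tau_Iic p σ h0, tau_locfin p σ hfin, ?_⟩
  intro u hu
  simp only
  rw [core1 p u hu σ, hrep u⁻¹ (inv_pos.mpr hu),
    lintegral_const_mul' _ _ ENNReal.ofReal_ne_top]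
  ring

lemma bwd (p : ℝ) (ψ : ℝ → ℝ≥0∞) (h : MonotoneOfOrderPos p ψ) :
    IncreasingOfOrderPos p (fun u => ENNReal.ofReal (u ^ (p - 1)) * ψ u⁻¹) := by
  obtain ⟨σ, h0, hfin, hrep⟩ := h
  refine ⟨(σ.map (fun r : ℝ => r⁻¹)).withDensity (fun s => ENNReal.ofReal (s ^ (1 - p))),
    tau_Iic p σ h0, tau_locfin p σ hfin, ?_⟩
  intro u hu
  simp only
  rw [core2 p u hu σ, hrep u⁻¹ (inv_pos.mpr hu),
    lintegral_const_mul' _ _ ENNReal.ofReal_ne_top]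
  ring

lemma IncreasingOfOrderPos.congr {p : ℝ} {f g : ℝ → ℝ≥0∞} (h : IncreasingOfOrderPos p f)
    (he : ∀ u : ℝ, 0 < u → f u = g u) : IncreasingOfOrderPos p g := by
  obtain ⟨σ, h0, hfin, hrep⟩ := h
  exact ⟨σ, h0, hfin, fun u hu => (he u hu) ▸ hrep u hu⟩

end Statement12Aux

theorem statement12 (p : ℝ) (hp : 0 < p) (φ : ℝ → ℝ≥0∞)
    (hloc : ∀ s : Set ℝ, IsCompact s → s ⊆ Ioi 0 → (∫⁻ u in s, φ u) < ⊤) :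
    IncreasingOfOrderPos p φ ↔
      MonotoneOfOrderPos p (fun u => ENNReal.ofReal (u ^ (p - 1)) * φ u⁻¹) := by
  constructor
  · exact Statement12Aux.fwd p φ
  · intro h
    have h2 := Statement12Aux.bwd p _ h
    refine Statement12Aux.IncreasingOfOrderPos.congr h2 fun u hu => ?_
    simp only [inv_inv]
    rw [← mul_assoc, ← ENNReal.ofReal_mul (Real.rpow_nonneg hu.le _),
      Real.inv_rpow hu.le, mul_inv_cancel₀ (ne_of_gt (Real.rpow_pos_of_pos hu _)),
      ENNReal.ofReal_one, one_mul]
end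
end

section
/- There exists a function φ : (0,∞) → [0,∞) such that u ↦ φ(1/u) is completely monotone on (0,∞) but φ is not completely increasing on (0,∞). Concretely, φ(u) = u^{1/2} works: u ↦ u^{-1/2} is completely monotone, but u^{1/2} is not increasing of order p on (0,∞) for every p > 0. -/
open MeasureTheory Set
open scoped ENNReal
noncomputable section

/-- `ψ` is completely monotone on `(0,∞)`. -/
def CompletelyMonotonePos (ψ : ℝ → ℝ≥0∞) : Prop :=
  ∀ p : ℝ, 0 < p → MonotoneOfOrderPos p ψ

/-- `φ` is completely increasing on `(0,∞)`. -/
def CompletelyIncreasingPos (φ : ℝ → ℝ≥0∞) : Prop :=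
  ∀ p : ℝ, 0 < p → IncreasingOfOrderPos p φ

/-- substitution `r = u + u x` for lower Lebesgue integrals over `(u,∞)`. -/
lemma subst_Ioi (u : ℝ) (hu : 0 < u) (f : ℝ → ℝ≥0∞) :
    ∫⁻ r in Ioi u, f r = ENNReal.ofReal u * ∫⁻ x in Ioi 0, f (u + u * x) := by
  have h1 : ∫⁻ x in Ioi 0, f (u + x) = ∫⁻ r in Ioi u, f r := by
    have h := (measurePreserving_add_left (volume : Measure ℝ) u).setLIntegral_comp_emb
      (measurableEmbedding_addLeft u) f (Ioi 0)
    have himg : (fun x => u + x) '' Ioi 0 = Ioi u := by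
      simp only [image_add_left, preimage_const_add_Ioi, sub_neg_eq_add, zero_add]
    rw [himg] at h
    exact h
  have hmp : MeasurePreserving (fun x : ℝ => u * x) volume
      (ENNReal.ofReal |u⁻¹| • volume) :=
    ⟨measurable_const_mul u, Real.map_volume_mul_left hu.ne'⟩
  have hemb : MeasurableEmbedding (fun x : ℝ => u * x) :=
    (Homeomorph.mulLeft₀ u hu.ne').measurableEmbedding
  have h2 := hmp.setLIntegral_comp_emb hemb (fun x => f (u + x)) (Ioi 0)
  have himg2 : (fun x : ℝ => u * x) '' Ioi 0 = Ioi 0 := by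
    ext x
    simp only [mem_image, mem_Ioi]
    constructor
    · rintro ⟨y, hy, rfl⟩; positivity
    · intro hx; exact ⟨x / u, by positivity, by field_simp⟩
  rw [himg2] at h2
  rw [Measure.restrict_smul, lintegral_smul_measure] at h2
  -- h2 : ∫⁻ x in Ioi 0, f (u + u * x) = ofReal |u⁻¹| * ∫⁻ x in Ioi 0, f (u + x)
  rw [h2, ← h1, smul_eq_mul, abs_of_pos (inv_pos.mpr hu), ← mul_assoc, ← ENNReal.ofReal_mul hu.le,
    mul_inv_cancel₀ hu.ne', ENNReal.ofReal_one, one_mul]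

lemma sqrtinv_CM : CompletelyMonotonePos (fun u : ℝ => ENNReal.ofReal ((u⁻¹) ^ ((2:ℝ)⁻¹))) := by
  intro p hp
  set e : ℝ := -(p + 2⁻¹) with he
  have he0 : e ≤ 0 := by rw [he]; nlinarith
  have hgmeas : Measurable (fun x : ℝ => ENNReal.ofReal (x ^ (p-1) * (1+x) ^ e)) := by fun_prop
  set K : ℝ≥0∞ := ∫⁻ x in Ioi 0, ENNReal.ofReal (x ^ (p-1) * (1+x) ^ e) with hK
  have hGpos : 0 < Real.Gamma p := Real.Gamma_pos_of_pos hp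
  have hK0 : K ≠ 0 := by
    rw [hK, ← pos_iff_ne_zero, lintegral_pos_iff_support hgmeas]
    have hsub : Ioi (0:ℝ) ⊆ Function.support
        (fun x : ℝ => ENNReal.ofReal (x ^ (p-1) * (1+x) ^ e)) := by
      intro x hx
      have h1 : 0 < x ^ (p-1) := Real.rpow_pos_of_pos hx _
      have h2 : 0 < (1+x) ^ e := Real.rpow_pos_of_pos (by simp only [mem_Ioi] at hx; linarith) _
      exact (ENNReal.ofReal_pos.mpr (mul_pos h1 h2)).ne'
    calc (0:ℝ≥0∞) < volume (Ioi (0:ℝ)) := by rw [Real.volume_Ioi]; exact ENNReal.zero_lt_top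
    _ = (volume.restrict (Ioi (0:ℝ))) (Ioi 0) := by
        rw [Measure.restrict_apply measurableSet_Ioi, inter_self]
    _ ≤ (volume.restrict (Ioi (0:ℝ))) _ := measure_mono hsub
  have hKtop : K ≠ ⊤ := by
    have hsplit : Ioi (0:ℝ) = Ioc 0 1 ∪ Ioi 1 := (Ioc_union_Ioi_eq_Ioi zero_le_one).symm
    have hdisj : Disjoint (Ioc (0:ℝ) 1) (Ioi 1) := by
      refine Set.disjoint_left.mpr ?_
      intro x hx hx'
      exact absurd hx.2 (not_le.mpr hx')
    rw [hK, hsplit, lintegral_union measurableSet_Ioi hdisj]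
    have hb1 : ∫⁻ x in Ioc (0:ℝ) 1, ENNReal.ofReal (x ^ (p-1) * (1+x) ^ e)
        ≤ ∫⁻ x in Ioc (0:ℝ) 1, ENNReal.ofReal (x ^ (p-1)) := by
      refine setLIntegral_mono (by fun_prop) ?_
      intro x hx
      refine ENNReal.ofReal_le_ofReal ?_
      have h1 : (1+x) ^ e ≤ 1 :=
        Real.rpow_le_one_of_one_le_of_nonpos (by linarith [hx.1]) he0
      exact mul_le_of_le_one_right (Real.rpow_nonneg hx.1.le _) h1
    have hf1 : IntegrableOn (fun x : ℝ => x ^ (p-1)) (Ioc 0 1) := by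
      rw [← intervalIntegrable_iff_integrableOn_Ioc_of_le zero_le_one]
      exact intervalIntegral.intervalIntegrable_rpow' (by linarith)
    have hb2 : ∫⁻ x in Ioi (1:ℝ), ENNReal.ofReal (x ^ (p-1) * (1+x) ^ e)
        ≤ ∫⁻ x in Ioi (1:ℝ), ENNReal.ofReal (x ^ (-(1+2⁻¹) : ℝ)) := by
      refine setLIntegral_mono (by fun_prop) ?_
      intro x hx
      simp only [mem_Ioi] at hx
      refine ENNReal.ofReal_le_ofReal ?_
      have hx0 : (0:ℝ) < x := by linarith
      have h1 : (1+x) ^ e ≤ x ^ e :=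
        Real.rpow_le_rpow_of_nonpos hx0 (by linarith) he0
      calc x ^ (p-1) * (1+x) ^ e ≤ x ^ (p-1) * x ^ e :=
            mul_le_mul_of_nonneg_left h1 (Real.rpow_nonneg hx0.le _)
      _ = x ^ (p - 1 + e) := (Real.rpow_add hx0 _ _).symm
      _ = x ^ (-(1+2⁻¹) : ℝ) := by rw [he]; ring_nf
    have hf2 : IntegrableOn (fun x : ℝ => x ^ (-(1+2⁻¹) : ℝ)) (Ioi 1) :=
      integrableOn_Ioi_rpow_of_lt (by norm_num) one_pos
    have hlt1 := lt_of_le_of_lt hb1 hf1.lintegral_lt_top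
    have hlt2 := lt_of_le_of_lt hb2 hf2.lintegral_lt_top
    exact (ENNReal.add_lt_top.mpr ⟨hlt1, hlt2⟩).ne
  set c : ℝ≥0∞ := ENNReal.ofReal (Real.Gamma p) * K⁻¹ with hc
  have hctop : c ≠ ⊤ := by
    rw [hc]
    exact (ENNReal.mul_lt_top ENNReal.ofReal_lt_top
      (ENNReal.inv_lt_top.mpr (pos_iff_ne_zero.mpr hK0))).ne
  have hDmeas : Measurable ((Ioi (0:ℝ)).indicator
      (fun r => c * ENNReal.ofReal (r ^ e))) := by
    refine Measurable.indicator ?_ measurableSet_Ioi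
    fun_prop
  refine ⟨volume.withDensity ((Ioi (0:ℝ)).indicator
      (fun r => c * ENNReal.ofReal (r ^ e))), ?_, ?_, ?_⟩
  · -- σ (Iic 0) = 0
    rw [withDensity_apply _ measurableSet_Iic]
    rw [setLIntegral_congr_fun measurableSet_Iic
      (fun r (hr : r ∈ Iic 0) =>
        indicator_of_notMem (by simpa using hr) _), lintegral_zero]
  · -- local finiteness
    intro s hsc hss
    rcases s.eq_empty_or_nonempty with rfl | hne
    · simp
    · have hεmem : sInf s ∈ s := hsc.sInf_mem hne
      have hεpos : 0 < sInf s := hss hεmem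
      rw [withDensity_apply _ hsc.measurableSet]
      have hbd : ∀ r ∈ s, (Ioi (0:ℝ)).indicator (fun r => c * ENNReal.ofReal (r ^ e)) r
          ≤ c * ENNReal.ofReal ((sInf s) ^ e) := by
        intro r hr
        have hr0 : 0 < r := hss hr
        rw [indicator_of_mem (mem_Ioi.mpr hr0) _]
        refine mul_le_mul_right (ENNReal.ofReal_le_ofReal ?_) c
        exact Real.rpow_le_rpow_of_nonpos hεpos (csInf_le hsc.bddBelow hr) he0
      calc ∫⁻ r in s, (Ioi (0:ℝ)).indicator (fun r => c * ENNReal.ofReal (r ^ e)) r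
          ≤ ∫⁻ _ in s, c * ENNReal.ofReal ((sInf s) ^ e) :=
            setLIntegral_mono measurable_const hbd
      _ = c * ENNReal.ofReal ((sInf s) ^ e) * volume s := setLIntegral_const _ _
      _ < ⊤ := ENNReal.mul_lt_top
            (ENNReal.mul_lt_top (lt_top_iff_ne_top.mpr hctop) ENNReal.ofReal_lt_top)
            hsc.measure_lt_top
  · -- the representation identity
    intro u hu
    have hFmeas : Measurable (fun r : ℝ => ENNReal.ofReal ((r - u) ^ (p-1))) := by fun_prop
    rw [restrict_withDensity measurableSet_Ioi,
      lintegral_withDensity_eq_lintegral_mul _ hDmeas hFmeas]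
    have hcong : ∀ r ∈ Ioi u,
        ((Ioi (0:ℝ)).indicator (fun r => c * ENNReal.ofReal (r ^ e)) *
          fun r : ℝ => ENNReal.ofReal ((r - u) ^ (p-1))) r
        = c * ENNReal.ofReal ((r - u) ^ (p-1) * r ^ e) := by
      intro r hr
      have hr0 : (0:ℝ) < r := lt_trans hu hr
      simp only [Pi.mul_apply, indicator_of_mem (mem_Ioi.mpr hr0)]
      rw [ENNReal.ofReal_mul (Real.rpow_nonneg (by simp only [mem_Ioi] at hr; linarith) _)]
      ring
    rw [setLIntegral_congr_fun measurableSet_Ioi hcong,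
      lintegral_const_mul' c _ hctop]
    have hJ : ∫⁻ r in Ioi u, ENNReal.ofReal ((r - u) ^ (p-1) * r ^ e)
        = ENNReal.ofReal ((u⁻¹) ^ ((2:ℝ)⁻¹)) * K := by
      rw [subst_Ioi u hu]
      have hptwise : ∀ x ∈ Ioi (0:ℝ),
          ENNReal.ofReal ((u + u * x - u) ^ (p-1) * (u + u * x) ^ e)
          = ENNReal.ofReal (u ^ (-(1+2⁻¹) : ℝ)) *
            ENNReal.ofReal (x ^ (p-1) * (1+x) ^ e) := by
        intro x hx
        simp only [mem_Ioi] at hx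
        rw [← ENNReal.ofReal_mul (Real.rpow_nonneg (by positivity) _)]
        congr 1
        have h1 : u + u * x - u = u * x := by ring
        have h2 : u + u * x = u * (1 + x) := by ring
        rw [h1, h2, Real.mul_rpow hu.le hx.le, Real.mul_rpow hu.le (by linarith)]
        rw [show u ^ (p-1) * x ^ (p-1) * (u ^ e * (1+x) ^ e)
            = (u ^ (p-1) * u ^ e) * (x ^ (p-1) * (1+x) ^ e) by ring]
        rw [← Real.rpow_add hu]
        congr 2
        rw [he]; ring
      rw [setLIntegral_congr_fun measurableSet_Ioi hptwise,
        lintegral_const_mul' _ _ ENNReal.ofReal_ne_top, ← hK, ← mul_assoc,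
        ← ENNReal.ofReal_mul hu.le]
      congr 2
      have : (u⁻¹) ^ ((2:ℝ)⁻¹) = u ^ (-(2⁻¹) : ℝ) := by
        rw [Real.inv_rpow hu.le, ← Real.rpow_neg hu.le]
      rw [this]
      nth_rewrite 1 [show u = u ^ (1:ℝ) by rw [Real.rpow_one]]
      rw [← Real.rpow_add hu]
      norm_num
    rw [hJ, hc]
    rw [show (ENNReal.ofReal (Real.Gamma p))⁻¹ *
        (ENNReal.ofReal (Real.Gamma p) * K⁻¹ * (ENNReal.ofReal ((u⁻¹) ^ ((2:ℝ)⁻¹)) * K))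
        = ((ENNReal.ofReal (Real.Gamma p))⁻¹ * ENNReal.ofReal (Real.Gamma p)) *
          (K⁻¹ * K) * ENNReal.ofReal ((u⁻¹) ^ ((2:ℝ)⁻¹)) by ring]
    rw [ENNReal.inv_mul_cancel (by simpa using hGpos) ENNReal.ofReal_ne_top,
      ENNReal.inv_mul_cancel hK0 hKtop, one_mul, one_mul]

lemma not_CI : ¬ CompletelyIncreasingPos (fun u : ℝ => ENNReal.ofReal (u ^ ((2:ℝ)⁻¹))) := by
  intro h
  obtain ⟨σ, -, -, hrep⟩ := h 2 two_pos
  have hφ : ∀ u : ℝ, 0 < u → ENNReal.ofReal (u ^ ((2:ℝ)⁻¹))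
      = ∫⁻ r in Ioo 0 u, ENNReal.ofReal (u - r) ∂σ := by
    intro u hu
    have h := hrep u hu
    simpa only [show (2:ℝ) - 1 = 1 by norm_num, Real.rpow_one, Real.Gamma_two,
      ENNReal.ofReal_one, inv_one, one_mul] using h
  have h1 : ∫⁻ r in Ioo (0:ℝ) 1, ENNReal.ofReal (1 - r) ∂σ
      = ∫⁻ r in Ioo (0:ℝ) 5, (Ioo (0:ℝ) 1).indicator (fun r => ENNReal.ofReal (1 - r)) r ∂σ := by
    rw [lintegral_indicator measurableSet_Ioo, Measure.restrict_restrict measurableSet_Ioo]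
    congr 2
    rw [Ioo_inter_Ioo]
    norm_num
  have h2 : ∫⁻ r in Ioo (0:ℝ) 5, ENNReal.ofReal (9 - r) ∂σ
      ≤ ∫⁻ r in Ioo (0:ℝ) 9, ENNReal.ofReal (9 - r) ∂σ :=
    lintegral_mono_set (Ioo_subset_Ioo_right (by norm_num))
  have key : 2 * ∫⁻ r in Ioo (0:ℝ) 5, ENNReal.ofReal (5 - r) ∂σ
      ≤ (∫⁻ r in Ioo (0:ℝ) 1, ENNReal.ofReal (1 - r) ∂σ)
        + ∫⁻ r in Ioo (0:ℝ) 9, ENNReal.ofReal (9 - r) ∂σ := by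
    rw [← lintegral_const_mul' 2 _ (by norm_num), h1]
    have hstep : ∫⁻ r in Ioo (0:ℝ) 5, 2 * ENNReal.ofReal (5 - r) ∂σ
        ≤ ∫⁻ r in Ioo (0:ℝ) 5,
            ((Ioo (0:ℝ) 1).indicator (fun r => ENNReal.ofReal (1 - r)) r
              + ENNReal.ofReal (9 - r)) ∂σ := by
      refine setLIntegral_mono
        (((by fun_prop : Measurable fun r : ℝ => ENNReal.ofReal (1 - r)).indicator
          measurableSet_Ioo).add (by fun_prop)) ?_
      intro r hr
      obtain ⟨hra, hrb⟩ := mem_Ioo.mp hr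
      by_cases hr1 : r < 1
      · rw [indicator_of_mem (mem_Ioo.mpr ⟨hra, hr1⟩), ← ENNReal.ofReal_add (by linarith) (by linarith),
          show (2:ℝ≥0∞) = ENNReal.ofReal 2 by norm_num, ← ENNReal.ofReal_mul (by norm_num)]
        exact ENNReal.ofReal_le_ofReal (by linarith)
      · rw [indicator_of_notMem (fun hmem => hr1 hmem.2) _, zero_add,
          show (2:ℝ≥0∞) = ENNReal.ofReal 2 by norm_num, ← ENNReal.ofReal_mul (by norm_num)]
        push_neg at hr1
        exact ENNReal.ofReal_le_ofReal (by linarith)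
    refine le_trans hstep ?_
    rw [lintegral_add_left ((by fun_prop : Measurable fun r : ℝ => ENNReal.ofReal (1 - r)).indicator measurableSet_Ioo)]
    exact add_le_add le_rfl h2
  rw [← hφ 5 (by norm_num), ← hφ 1 (by norm_num), ← hφ 9 (by norm_num)] at key
  have h9 : (9:ℝ) ^ ((2:ℝ)⁻¹) = 3 := by
    rw [show (9:ℝ) = 3 ^ (2:ℕ) by norm_num, ← Real.rpow_natCast 3 2,
      ← Real.rpow_mul (by norm_num)]
    norm_num
  have h5 : 2 < (5:ℝ) ^ ((2:ℝ)⁻¹) := by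
    have hs : (5:ℝ) ^ ((2:ℝ)⁻¹) = Real.sqrt 5 := by
      rw [Real.sqrt_eq_rpow]; norm_num
    rw [hs]
    have : Real.sqrt 4 < Real.sqrt 5 := Real.sqrt_lt_sqrt (by norm_num) (by norm_num)
    rw [show (4:ℝ) = 2 ^ 2 by norm_num, Real.sqrt_sq (by norm_num)] at this
    exact this
  rw [Real.one_rpow, h9, ENNReal.ofReal_one,
    show (2:ℝ≥0∞) = ENNReal.ofReal 2 by norm_num, ← ENNReal.ofReal_mul (by norm_num),
    show (1:ℝ≥0∞) = ENNReal.ofReal 1 by norm_num,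
    ← ENNReal.ofReal_add (by norm_num) (by norm_num)] at key
  have := (ENNReal.ofReal_le_ofReal_iff (by norm_num)).mp key
  linarith

theorem statement13 :
    ∃ φ : ℝ → ℝ≥0∞,
      φ = (fun u => ENNReal.ofReal (u ^ ((2 : ℝ)⁻¹))) ∧
      CompletelyMonotonePos (fun u => φ u⁻¹) ∧
      ¬ CompletelyIncreasingPos φ := by
  exact ⟨_, rfl, sqrtinv_CM, not_CI⟩
end
end

section
/- Let α < 2 and p > 0, and let f*(s) be the inverse of g*(t) = Γ(p)^{-1} ∫_t^∞ (u−1)^{p−1} u^{α−p−2} du (t > 1). Then f*(s) ~ ((2−α)Γ(p)s)^{−1/(2−α)} as s ↓ 0; moreover ∫_0^{c*} f*(s)² ds < ∞ if and only if α < 0, where c* = Γ(2−α)/Γ(p+2−α). -/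
open MeasureTheory Set Filter Topology
open scoped ENNReal
noncomputable section

namespace Stmt16Aux

/-- The integrand of `g*`. -/
def phi (p α u : ℝ) : ℝ := (u - 1) ^ (p - 1) * u ^ (α - p - 2)

lemma phi_eq {p α u : ℝ} (hu : 1 < u) :
    phi p α u = (1 - 1 / u) ^ (p - 1) * u ^ (α - 3) := by
  have hu0 : (0 : ℝ) < u := lt_trans one_pos hu
  have h1 : u - 1 = u * (1 - 1 / u) := by field_simp
  have h2 : (0 : ℝ) ≤ 1 - 1 / u := by
    have : 1 / u < 1 := by rw [div_lt_one hu0]; exact hu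
    linarith
  rw [phi, h1, Real.mul_rpow hu0.le h2, mul_comm (u ^ (p - 1)) _, mul_assoc,
    ← Real.rpow_add hu0]
  congr 2
  ring

lemma phi_nonneg {p α u : ℝ} (hu : 1 ≤ u) : 0 ≤ phi p α u :=
  mul_nonneg (Real.rpow_nonneg (by linarith) _) (Real.rpow_nonneg (by linarith) _)

lemma phi_measurable (p α : ℝ) : Measurable (phi p α) :=
  ((measurable_id.sub_const (1 : ℝ)).pow measurable_const).mul
    (measurable_id.pow measurable_const)

lemma phi_bounds {p α t u : ℝ} (ht : 1 < t) (hu : t ≤ u) :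
    min 1 ((1 - 1 / t) ^ (p - 1)) * u ^ (α - 3) ≤ phi p α u ∧
      phi p α u ≤ max 1 ((1 - 1 / t) ^ (p - 1)) * u ^ (α - 3) := by
  have ht0 : (0 : ℝ) < t := lt_trans one_pos ht
  have hu1 : 1 < u := lt_of_lt_of_le ht hu
  have hu0 : (0 : ℝ) < u := lt_trans one_pos hu1
  have ha0 : 0 < 1 - 1 / t := by
    have : 1 / t < 1 := by rw [div_lt_one ht0]; exact ht
    linarith
  have hax : 1 - 1 / t ≤ 1 - 1 / u := by
    have : 1 / u ≤ 1 / t := one_div_le_one_div_of_le ht0 hu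
    linarith
  have hx0 : 0 < 1 - 1 / u := lt_of_lt_of_le ha0 hax
  have hx1 : 1 - 1 / u ≤ 1 := by
    have : 0 < 1 / u := by positivity
    linarith
  have key : min 1 ((1 - 1 / t) ^ (p - 1)) ≤ (1 - 1 / u) ^ (p - 1) ∧
      (1 - 1 / u) ^ (p - 1) ≤ max 1 ((1 - 1 / t) ^ (p - 1)) := by
    rcases le_or_gt 0 (p - 1) with hq | hq
    · constructor
      · exact le_trans (min_le_right _ _) (Real.rpow_le_rpow ha0.le hax hq)
      · exact le_trans (Real.rpow_le_one hx0.le hx1 hq) (le_max_left _ _)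
    · constructor
      · exact le_trans (min_le_left _ _)
          (Real.one_le_rpow_of_pos_of_le_one_of_nonpos hx0 hx1 hq.le)
      · exact le_trans (Real.rpow_le_rpow_of_nonpos ha0 hax hq.le) (le_max_right _ _)
  have hpow : (0 : ℝ) ≤ u ^ (α - 3) := Real.rpow_nonneg hu0.le _
  rw [phi_eq hu1]
  exact ⟨mul_le_mul_of_nonneg_right key.1 hpow, mul_le_mul_of_nonneg_right key.2 hpow⟩

lemma phi_integrableOn {p α : ℝ} (hα : α < 2) {t : ℝ} (ht : 1 < t) :
    IntegrableOn (phi p α) (Ioi t) := by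
  have ht0 : (0 : ℝ) < t := lt_trans one_pos ht
  have hbase : IntegrableOn (fun u : ℝ => u ^ (α - 3)) (Ioi t) :=
    integrableOn_Ioi_rpow_of_lt (by linarith) ht0
  refine ((hbase.const_mul (max 1 ((1 - 1 / t) ^ (p - 1)))).mono'
    (phi_measurable p α).aestronglyMeasurable ?_)
  filter_upwards [ae_restrict_mem measurableSet_Ioi] with u hu
  rw [Real.norm_eq_abs, abs_of_nonneg (phi_nonneg (le_of_lt (lt_trans ht hu)))]
  exact (phi_bounds ht (le_of_lt hu)).2

lemma integral_rpow_Ioi {α : ℝ} (hα : α < 2) {t : ℝ} (ht : 0 < t) :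
    ∫ u in Ioi t, u ^ (α - 3) = t ^ (α - 2) / (2 - α) := by
  rw [integral_Ioi_rpow_of_lt (by linarith : α - 3 < -1) ht, show α - 3 + 1 = α - 2 by ring,
    show (2 : ℝ) - α = -(α - 2) by ring, div_neg, neg_div]

lemma I_bounds {p α : ℝ} (hα : α < 2) {t : ℝ} (ht : 1 < t) :
    min 1 ((1 - 1 / t) ^ (p - 1)) * (t ^ (α - 2) / (2 - α)) ≤ (∫ u in Ioi t, phi p α u) ∧
      (∫ u in Ioi t, phi p α u) ≤
        max 1 ((1 - 1 / t) ^ (p - 1)) * (t ^ (α - 2) / (2 - α)) := by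
  have ht0 : (0 : ℝ) < t := lt_trans one_pos ht
  have hbase : IntegrableOn (fun u : ℝ => u ^ (α - 3)) (Ioi t) :=
    integrableOn_Ioi_rpow_of_lt (by linarith) ht0
  have hphi := phi_integrableOn (p := p) hα ht
  constructor
  · calc min 1 ((1 - 1 / t) ^ (p - 1)) * (t ^ (α - 2) / (2 - α))
        = ∫ u in Ioi t, min 1 ((1 - 1 / t) ^ (p - 1)) * u ^ (α - 3) := by
          rw [MeasureTheory.integral_const_mul, integral_rpow_Ioi hα ht0]
      _ ≤ ∫ u in Ioi t, phi p α u := by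
          refine setIntegral_mono_on (hbase.const_mul _) hphi measurableSet_Ioi ?_
          intro u hu
          exact (phi_bounds ht (le_of_lt hu)).1
  · calc (∫ u in Ioi t, phi p α u)
        ≤ ∫ u in Ioi t, max 1 ((1 - 1 / t) ^ (p - 1)) * u ^ (α - 3) := by
          refine setIntegral_mono_on hphi (hbase.const_mul _) measurableSet_Ioi ?_
          intro u hu
          exact (phi_bounds ht (le_of_lt hu)).2
      _ = max 1 ((1 - 1 / t) ^ (p - 1)) * (t ^ (α - 2) / (2 - α)) := by
          rw [MeasureTheory.integral_const_mul, integral_rpow_Ioi hα ht0]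

lemma I_pos {p α : ℝ} (hα : α < 2) {t : ℝ} (ht : 1 < t) :
    0 < ∫ u in Ioi t, phi p α u := by
  have ht0 : (0 : ℝ) < t := lt_trans one_pos ht
  have ha0 : 0 < 1 - 1 / t := by
    have : 1 / t < 1 := by rw [div_lt_one ht0]; exact ht
    linarith
  refine lt_of_lt_of_le ?_ (I_bounds hα ht).1
  have h1 : 0 < min 1 ((1 - 1 / t) ^ (p - 1)) :=
    lt_min one_pos (Real.rpow_pos_of_pos ha0 _)
  have h2 : 0 < t ^ (α - 2) / (2 - α) :=
    div_pos (Real.rpow_pos_of_pos ht0 _) (by linarith)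
  positivity

lemma I_antitone {p α : ℝ} (hα : α < 2) {t₁ t₂ : ℝ} (ht₁ : 1 < t₁) (h : t₁ ≤ t₂) :
    (∫ u in Ioi t₂, phi p α u) ≤ ∫ u in Ioi t₁, phi p α u := by
  refine setIntegral_mono_set (phi_integrableOn hα ht₁) ?_
    (HasSubset.Subset.eventuallyLE (Ioi_subset_Ioi h))
  filter_upwards [ae_restrict_mem measurableSet_Ioi] with u hu
  exact phi_nonneg (le_of_lt (lt_trans ht₁ hu))

lemma tendsto_I {p α : ℝ} (hα : α < 2) :
    Tendsto (fun t => (2 - α) * ((∫ u in Ioi t, phi p α u) * t ^ (2 - α)))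
      atTop (𝓝 1) := by
  have hm : Tendsto (fun t : ℝ => (1 - 1 / t) ^ (p - 1)) atTop (𝓝 1) := by
    have h1 : Tendsto (fun t : ℝ => 1 - 1 / t) atTop (𝓝 1) := by
      have := tendsto_inv_atTop_zero (𝕜 := ℝ)
      have h2 : Tendsto (fun t : ℝ => 1 - t⁻¹) atTop (𝓝 (1 - 0)) :=
        tendsto_const_nhds.sub this
      simpa [one_div] using h2
    have := h1.rpow_const (p := p - 1) (Or.inl one_ne_zero)
    simpa using this
  have hmin : Tendsto (fun t : ℝ => min 1 ((1 - 1 / t) ^ (p - 1))) atTop (𝓝 1) := by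
    have h0 : Tendsto (fun _ : ℝ => (1 : ℝ)) atTop (𝓝 1) := tendsto_const_nhds
    simpa using h0.min hm
  have hmax : Tendsto (fun t : ℝ => max 1 ((1 - 1 / t) ^ (p - 1))) atTop (𝓝 1) := by
    have h0 : Tendsto (fun _ : ℝ => (1 : ℝ)) atTop (𝓝 1) := tendsto_const_nhds
    simpa using h0.max hm
  refine tendsto_of_tendsto_of_tendsto_of_le_of_le' hmin hmax ?_ ?_
  · filter_upwards [eventually_gt_atTop (1 : ℝ)] with t ht
    have ht0 : (0 : ℝ) < t := lt_trans one_pos ht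
    have hb := (I_bounds (p := p) hα ht).1
    have hpow : 0 < t ^ (2 - α) := Real.rpow_pos_of_pos ht0 _
    have hcancel : t ^ (α - 2) * t ^ (2 - α) = 1 := by
      rw [← Real.rpow_add ht0, show α - 2 + (2 - α) = 0 by ring, Real.rpow_zero]
    have h2α : (0 : ℝ) < 2 - α := by linarith
    have := mul_le_mul_of_nonneg_right hb hpow.le
    set m := min 1 ((1 - 1 / t) ^ (p - 1)) with hmdef
    calc m = m * (t ^ (α - 2) * t ^ (2 - α)) := by rw [hcancel, mul_one]
      _ = (2 - α) * (m * (t ^ (α - 2) / (2 - α)) * t ^ (2 - α)) := by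
          field_simp
      _ ≤ (2 - α) * ((∫ u in Ioi t, phi p α u) * t ^ (2 - α)) :=
          mul_le_mul_of_nonneg_left this h2α.le
  · filter_upwards [eventually_gt_atTop (1 : ℝ)] with t ht
    have ht0 : (0 : ℝ) < t := lt_trans one_pos ht
    have hb := (I_bounds (p := p) hα ht).2
    have hpow : 0 < t ^ (2 - α) := Real.rpow_pos_of_pos ht0 _
    have hcancel : t ^ (α - 2) * t ^ (2 - α) = 1 := by
      rw [← Real.rpow_add ht0, show α - 2 + (2 - α) = 0 by ring, Real.rpow_zero]
    have h2α : (0 : ℝ) < 2 - α := by linarith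
    have := mul_le_mul_of_nonneg_right hb hpow.le
    set m := max 1 ((1 - 1 / t) ^ (p - 1)) with hmdef
    calc (2 - α) * ((∫ u in Ioi t, phi p α u) * t ^ (2 - α))
        ≤ (2 - α) * (m * (t ^ (α - 2) / (2 - α)) * t ^ (2 - α)) := by
          refine mul_le_mul_of_nonneg_left ?_ h2α.le
          exact mul_le_mul_of_nonneg_right hb hpow.le
      _ = m * (t ^ (α - 2) * t ^ (2 - α)) := by field_simp
      _ = m := by rw [hcancel, mul_one]

end Stmt16Aux

theorem statement16 (p α : ℝ) (hp : 0 < p) (hα : α < 2)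
    (gstar : ℝ → ℝ)
    (hg : ∀ t : ℝ, 1 < t →
      gstar t = (Real.Gamma p)⁻¹ *
        (∫⁻ u in Ioi t, ENNReal.ofReal ((u - 1) ^ (p - 1) * u ^ (α - p - 2))).toReal)
    (fstar : ℝ → ℝ)
    -- `f*` is the inverse function of `g*` on `(0, c*)`, `c* = Γ(2-α)/Γ(p+2-α)`
    (hf : ∀ s ∈ Ioo (0 : ℝ) (Real.Gamma (2 - α) / Real.Gamma (p + 2 - α)),
      1 < fstar s ∧ gstar (fstar s) = s) :
    -- `f*(s) ~ ((2-α)Γ(p)s)^{-1/(2-α)}` as `s ↓ 0`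
    Tendsto (fun s : ℝ => fstar s / ((2 - α) * Real.Gamma p * s) ^ (-(2 - α)⁻¹))
      (𝓝[>] (0 : ℝ)) (𝓝 1) ∧
    -- `∫₀^{c*} f*(s)² ds < ∞` iff `α < 0`
    ((∫⁻ s in Ioo (0 : ℝ) (Real.Gamma (2 - α) / Real.Gamma (p + 2 - α)),
        ENNReal.ofReal (fstar s ^ 2)) < ⊤ ↔ α < 0) := by
  have h2α : (0 : ℝ) < 2 - α := by linarith
  have hΓ : 0 < Real.Gamma p := Real.Gamma_pos_of_pos hp
  set c := Real.Gamma (2 - α) / Real.Gamma (p + 2 - α) with hcdef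
  have hc : 0 < c :=
    div_pos (Real.Gamma_pos_of_pos h2α) (Real.Gamma_pos_of_pos (by linarith))
  set A := (2 - α) * Real.Gamma p with hAdef
  have hApos : 0 < A := mul_pos h2α hΓ
  set e := -(2 - α)⁻¹ with hedef
  set r := e + e with hrdef
  -- `g*` in terms of a real integral
  have hgI : ∀ t : ℝ, 1 < t →
      gstar t = (Real.Gamma p)⁻¹ * ∫ u in Ioi t, Stmt16Aux.phi p α u := by
    intro t ht
    rw [hg t ht]
    congr 1
    have hnn : 0 ≤ᵐ[volume.restrict (Ioi t)] fun u => Stmt16Aux.phi p α u := by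
      filter_upwards [ae_restrict_mem measurableSet_Ioi] with u hu
      exact Stmt16Aux.phi_nonneg (le_of_lt (lt_trans ht hu))
    have hkey := MeasureTheory.ofReal_integral_eq_lintegral_ofReal
      (Stmt16Aux.phi_integrableOn (p := p) hα ht) hnn
    simp only [Stmt16Aux.phi] at hkey ⊢
    rw [← hkey, ENNReal.toReal_ofReal]
    exact setIntegral_nonneg measurableSet_Ioi fun u hu =>
      Stmt16Aux.phi_nonneg (le_of_lt (lt_trans ht hu))
  have hgpos : ∀ t : ℝ, 1 < t → 0 < gstar t := fun t ht => by
    rw [hgI t ht]; exact mul_pos (inv_pos.2 hΓ) (Stmt16Aux.I_pos hα ht)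
  have hganti : ∀ t₁ t₂ : ℝ, 1 < t₁ → t₁ ≤ t₂ → gstar t₂ ≤ gstar t₁ := by
    intro t₁ t₂ h1 h12
    rw [hgI t₁ h1, hgI t₂ (lt_of_lt_of_le h1 h12)]
    exact mul_le_mul_of_nonneg_left (Stmt16Aux.I_antitone hα h1 h12) (inv_pos.2 hΓ).le
  -- `fstar s → ∞` as `s → 0⁺`
  have htop : Tendsto fstar (𝓝[>] (0 : ℝ)) atTop := by
    rw [tendsto_atTop]
    intro M
    have hT1 : (1 : ℝ) < max M 2 := lt_of_lt_of_le one_lt_two (le_max_right _ _)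
    have hGT : 0 < gstar (max M 2) := hgpos _ hT1
    have hε : 0 < min (gstar (max M 2)) c := lt_min hGT hc
    filter_upwards [Ioo_mem_nhdsGT hε] with s hs
    have hsc : s ∈ Ioo (0 : ℝ) c := ⟨hs.1, lt_of_lt_of_le hs.2 (min_le_right _ _)⟩
    obtain ⟨hfs1, hfs2⟩ := hf s hsc
    by_contra hM
    push_neg at hM
    have hfsT : fstar s ≤ max M 2 := hM.le.trans (le_max_left _ _)
    have h2 : gstar (max M 2) ≤ s := hfs2 ▸ hganti (fstar s) (max M 2) hfs1 hfsT
    have h3 : s < gstar (max M 2) := lt_of_lt_of_le hs.2 (min_le_left _ _)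
    linarith
  -- the key limit
  have hY : Tendsto (fun s => A * s * fstar s ^ (2 - α)) (𝓝[>] (0 : ℝ)) (𝓝 1) := by
    refine Tendsto.congr' ?_ ((Stmt16Aux.tendsto_I (p := p) hα).comp htop)
    filter_upwards [Ioo_mem_nhdsGT hc] with s hs
    obtain ⟨hfs1, hfs2⟩ := hf s hs
    have hI : (∫ u in Ioi (fstar s), Stmt16Aux.phi p α u) = Real.Gamma p * s := by
      have h := (hgI (fstar s) hfs1).symm.trans hfs2
      field_simp at h
      linarith
    simp only [Function.comp]
    rw [hI, hAdef]
    ring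
  have hpart1 : Tendsto (fun s : ℝ => fstar s / (A * s) ^ e) (𝓝[>] (0 : ℝ)) (𝓝 1) := by
    have h1 := hY.rpow_const (p := (2 - α)⁻¹) (Or.inl one_ne_zero)
    rw [Real.one_rpow] at h1
    refine Tendsto.congr' ?_ h1
    filter_upwards [Ioo_mem_nhdsGT hc] with s hs
    obtain ⟨hfs1, _⟩ := hf s hs
    have hfs0 : 0 < fstar s := lt_trans one_pos hfs1
    have hAs : 0 < A * s := mul_pos hApos hs.1
    rw [Real.mul_rpow hAs.le (Real.rpow_nonneg hfs0.le _),
      ← Real.rpow_mul hfs0.le, mul_inv_cancel₀ (ne_of_gt h2α), Real.rpow_one,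
      hedef, Real.rpow_neg hAs.le, div_eq_mul_inv, inv_inv]
    ring
  -- bounds near zero
  have hbound : ∀ᶠ s in 𝓝[>] (0 : ℝ), s ∈ Ioo (0 : ℝ) c ∧
      fstar s ≤ 2 * (A * s) ^ e ∧ 1 / 2 * (A * s) ^ e ≤ fstar s := by
    have h1 : ∀ᶠ s in 𝓝[>] (0 : ℝ), fstar s / (A * s) ^ e ∈ Ioo (1 / 2 : ℝ) 2 :=
      hpart1 (Ioo_mem_nhds (by norm_num) (by norm_num))
    filter_upwards [h1, Ioo_mem_nhdsGT hc] with s hr0 hs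
    have hAs : 0 < A * s := mul_pos hApos hs.1
    have hpow : 0 < (A * s) ^ e := Real.rpow_pos_of_pos hAs _
    exact ⟨hs, ((div_lt_iff₀ hpow).1 hr0.2).le, ((lt_div_iff₀ hpow).1 hr0.1).le⟩
  rw [eventually_iff] at hbound
  obtain ⟨δ', hδ', hsub⟩ := mem_nhdsGT_iff_exists_Ioo_subset.1 hbound
  set δ := min δ' (c / 2) with hδdef
  have hδpos : 0 < δ := lt_min hδ' (by positivity)
  have hδc : δ < c := lt_of_le_of_lt (min_le_right _ _) (by linarith)
  have hδP : ∀ s ∈ Ioo (0 : ℝ) δ, s ∈ Ioo (0 : ℝ) c ∧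
      fstar s ≤ 2 * (A * s) ^ e ∧ 1 / 2 * (A * s) ^ e ≤ fstar s :=
    fun s hs => hsub ⟨hs.1, lt_of_lt_of_le hs.2 (min_le_left _ _)⟩
  have hr_iff : (-1 < r) ↔ α < 0 := by
    rw [hrdef, hedef, show -(2 - α)⁻¹ + -(2 - α)⁻¹ = -(2 * (2 - α)⁻¹) by ring, neg_lt_neg_iff,
      ← div_eq_mul_inv, div_lt_one h2α]
    constructor <;> intro <;> linarith
  -- splitting of the integral
  have hsplit : (∫⁻ s in Ioo (0 : ℝ) c, ENNReal.ofReal (fstar s ^ 2)) ≤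
      (∫⁻ s in Ioo (0 : ℝ) δ, ENNReal.ofReal (fstar s ^ 2)) +
        ∫⁻ s in Ico δ c, ENNReal.ofReal (fstar s ^ 2) := by
    refine le_trans (lintegral_mono_set ?_) (lintegral_union_le _ _ _)
    intro s hs
    rcases lt_or_ge s δ with h | h
    · exact Or.inl ⟨hs.1, h⟩
    · exact Or.inr ⟨h, hs.2⟩
  have piece1 : α < 0 → (∫⁻ s in Ioo (0 : ℝ) δ, ENNReal.ofReal (fstar s ^ 2)) < ⊤ := by
    intro hα0
    have hrgt : -1 < r := hr_iff.2 hα0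
    have hle : (∫⁻ s in Ioo (0 : ℝ) δ, ENNReal.ofReal (fstar s ^ 2)) ≤
        ∫⁻ s in Ioo (0 : ℝ) δ, ENNReal.ofReal (2 ^ 2 * A ^ r * s ^ r) := by
      refine lintegral_mono_ae ?_
      filter_upwards [ae_restrict_mem measurableSet_Ioo] with s hs
      refine ENNReal.ofReal_le_ofReal ?_
      obtain ⟨hsc, hub, _⟩ := hδP s hs
      have hs0 : 0 < s := hs.1
      have hAs : 0 < A * s := mul_pos hApos hs0
      have hfs0 : 0 < fstar s := lt_trans one_pos (hf s hsc).1
      calc fstar s ^ 2 ≤ (2 * (A * s) ^ e) ^ 2 := pow_le_pow_left₀ hfs0.le hub 2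
        _ = 2 ^ 2 * A ^ r * s ^ r := by
            rw [mul_pow, show ((A * s) ^ e) ^ 2 = (A * s) ^ (e + e) by
              rw [Real.rpow_add hAs]; ring, ← hrdef, Real.mul_rpow hApos.le hs0.le]
            ring
    refine lt_of_le_of_lt hle ?_
    have hint : IntegrableOn (fun s : ℝ => 2 ^ 2 * A ^ r * s ^ r) (Ioo (0 : ℝ) δ) :=
      ((intervalIntegral.integrableOn_Ioo_rpow_iff hδpos).2 hrgt).const_mul _
    have hnn : 0 ≤ᵐ[volume.restrict (Ioo (0 : ℝ) δ)]
        fun s : ℝ => 2 ^ 2 * A ^ r * s ^ r := by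
      filter_upwards [ae_restrict_mem measurableSet_Ioo] with s hs
      have h1 : 0 ≤ A ^ r := Real.rpow_nonneg hApos.le _
      have h2 : 0 ≤ s ^ r := Real.rpow_nonneg hs.1.le _
      positivity
    exact (hasFiniteIntegral_iff_ofReal hnn).1 hint.2
  have piece2 : (∫⁻ s in Ico δ c, ENNReal.ofReal (fstar s ^ 2)) < ⊤ := by
    have hδmem : δ ∈ Ioo (0 : ℝ) c := ⟨hδpos, hδc⟩
    have hδ1 := (hf δ hδmem).1
    have hmono : ∀ s ∈ Ico δ c, fstar s ≤ fstar δ := by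
      intro s hs
      have hsmem : s ∈ Ioo (0 : ℝ) c := ⟨lt_of_lt_of_le hδpos hs.1, hs.2⟩
      obtain ⟨hs1, hs2⟩ := hf s hsmem
      by_contra h
      push_neg at h
      have h4 := hganti (fstar δ) (fstar s) hδ1 h.le
      rw [hs2, (hf δ hδmem).2] at h4
      have h5 : s = δ := le_antisymm h4 hs.1
      rw [h5] at h
      exact lt_irrefl _ h
    calc (∫⁻ s in Ico δ c, ENNReal.ofReal (fstar s ^ 2))
        ≤ ∫⁻ _ in Ico δ c, ENNReal.ofReal (fstar δ ^ 2) := by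
          refine lintegral_mono_ae ?_
          filter_upwards [ae_restrict_mem measurableSet_Ico] with s hs
          refine ENNReal.ofReal_le_ofReal ?_
          have h0 : 0 ≤ fstar s :=
            le_of_lt (lt_trans one_pos (hf s ⟨lt_of_lt_of_le hδpos hs.1, hs.2⟩).1)
          exact pow_le_pow_left₀ h0 (hmono s hs) 2
      _ = ENNReal.ofReal (fstar δ ^ 2) * volume (Ico δ c) := setLIntegral_const _ _
      _ < ⊤ := by
          rw [Real.volume_Ico]
          exact ENNReal.mul_lt_top ENNReal.ofReal_lt_top ENNReal.ofReal_lt_top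
  have hconv : (∫⁻ s in Ioo (0 : ℝ) c, ENNReal.ofReal (fstar s ^ 2)) < ⊤ → α < 0 := by
    intro hfin
    by_contra h0
    push_neg at h0
    have hrle : r ≤ -1 := by
      by_contra hh
      push_neg at hh
      exact absurd (hr_iff.1 hh) (not_lt.2 h0)
    have hC'pos : (0 : ℝ) < (1 / 2) ^ 2 * A ^ r :=
      mul_pos (by norm_num) (Real.rpow_pos_of_pos hApos _)
    have hge : (∫⁻ s in Ioo (0 : ℝ) δ, ENNReal.ofReal ((1 / 2) ^ 2 * A ^ r * s ^ r)) ≤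
        ∫⁻ s in Ioo (0 : ℝ) δ, ENNReal.ofReal (fstar s ^ 2) := by
      refine lintegral_mono_ae ?_
      filter_upwards [ae_restrict_mem measurableSet_Ioo] with s hs
      refine ENNReal.ofReal_le_ofReal ?_
      obtain ⟨hsc, _, hlb⟩ := hδP s hs
      have hs0 : 0 < s := hs.1
      have hAs : 0 < A * s := mul_pos hApos hs0
      have hpowpos : 0 < (A * s) ^ e := Real.rpow_pos_of_pos hAs _
      calc (1 / 2) ^ 2 * A ^ r * s ^ r = (1 / 2 * (A * s) ^ e) ^ 2 := by
            rw [mul_pow, show ((A * s) ^ e) ^ 2 = (A * s) ^ (e + e) by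
              rw [Real.rpow_add hAs]; ring, ← hrdef, Real.mul_rpow hApos.le hs0.le]
            ring
        _ ≤ fstar s ^ 2 := pow_le_pow_left₀ (by positivity) hlb 2
    have hlt : (∫⁻ s in Ioo (0 : ℝ) δ, ENNReal.ofReal ((1 / 2) ^ 2 * A ^ r * s ^ r)) < ⊤ := by
      refine lt_of_le_of_lt (hge.trans (lintegral_mono_set ?_)) hfin
      exact fun s hs => ⟨hs.1, lt_trans hs.2 hδc⟩
    have hmeas : Measurable fun s : ℝ => (1 / 2 : ℝ) ^ 2 * A ^ r * s ^ r :=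
      (measurable_id.pow measurable_const).const_mul _
    have hnn : 0 ≤ᵐ[volume.restrict (Ioo (0 : ℝ) δ)]
        fun s : ℝ => (1 / 2 : ℝ) ^ 2 * A ^ r * s ^ r := by
      filter_upwards [ae_restrict_mem measurableSet_Ioo] with s hs
      have h1 : 0 ≤ A ^ r := Real.rpow_nonneg hApos.le _
      have h2 : 0 ≤ s ^ r := Real.rpow_nonneg hs.1.le _
      positivity
    have hInt : IntegrableOn (fun s : ℝ => (1 / 2 : ℝ) ^ 2 * A ^ r * s ^ r) (Ioo (0 : ℝ) δ) :=
      ⟨hmeas.aestronglyMeasurable, (hasFiniteIntegral_iff_ofReal hnn).2 hlt⟩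
    have heq : (fun s : ℝ => ((1 / 2 : ℝ) ^ 2 * A ^ r)⁻¹ * ((1 / 2 : ℝ) ^ 2 * A ^ r * s ^ r)) =
        fun s : ℝ => s ^ r := by
      funext s
      field_simp
    have hInt2 : IntegrableOn (fun s : ℝ => s ^ r) (Ioo (0 : ℝ) δ) := by
      have h3 := hInt.const_mul ((1 / 2 : ℝ) ^ 2 * A ^ r)⁻¹
      rwa [heq] at h3
    rw [intervalIntegral.integrableOn_Ioo_rpow_iff hδpos] at hInt2
    linarith
  exact ⟨hpart1, ⟨hconv, fun hα0 =>
    lt_of_le_of_lt hsplit (ENNReal.add_lt_top.2 ⟨piece1 hα0, piece2⟩)⟩⟩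
end
end
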